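/- arXiv:1708.06486 — 8 statements merged into one kernel-verified Lean document; each statement's English description precedes it below -/
import Mathlib

section
/- Let n ≥ 2 and let p be a prime. Then there exist an integer d ≥ 1 and a group homomorphism ρ : F_n → GL_d(ℤ) such that the image of ρ is infinite and ρ(x) has finite order for every p-primitive element x ∈ F_n. -/
set_option maxHeartbeats 4000000
set_option synthInstance.maxHeartbeats 400000

open scoped TensorProduct

/-- An element `x` of the free group `F_n` is `p`-primitive if its image in
`H₁(F_n; 𝔽_p) = (Abelianization F_n) ⊗_ℤ ℤ/p` is nonzero. -/
def IsPPrimitive (p : ℕ) {n : ℕ} (x : FreeGroup (Fin n)) : Prop :=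
  ((1 : ZMod p) ⊗ₜ[ℤ] Additive.ofMul (Abelianization.of x) :
    ZMod p ⊗[ℤ] Additive (Abelianization (FreeGroup (Fin n)))) ≠ 0

namespace MPaux

variable (n p : ℕ) [hp : Fact p.Prime]

/-- Words of length at most `p ^ n` in letters `Fin n`. -/
abbrev D : Type := {l : List (Fin n) // l.length ≤ p ^ n}

noncomputable instance : Fintype (D n p) := by
  classical
  apply Fintype.ofInjective (fun (x : D n p) (j : Fin (p ^ n)) => x.1[(j:ℕ)]?)
  rintro ⟨l₁, h₁⟩ ⟨l₂, h₂⟩ h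
  apply Subtype.ext
  apply List.ext_getElem?
  intro j
  by_cases hj : j < p ^ n
  · exact congrFun h ⟨j, hj⟩
  · rw [List.getElem?_eq_none (le_trans h₁ (le_of_not_gt hj)),
      List.getElem?_eq_none (le_trans h₂ (le_of_not_gt hj))]

abbrev V : Type := D n p → ZMod p

abbrev E : Type := Module.End (ZMod p) (V n p)

def Tfun (i : Fin n) (h : V n p) : (l : List (Fin n)) → l.length ≤ p ^ n → ZMod p
  | [], _ => 0
  | a :: s, hs => if a = i then h ⟨s, Nat.le_of_succ_le hs⟩ else 0

def T (i : Fin n) : E n p where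
  toFun h x := Tfun n p i h x.1 x.2
  map_add' f g := by
    funext x
    rcases x with ⟨l, hl⟩
    cases l with
    | nil => simp [Tfun]
    | cons a s => by_cases hai : a = i <;> simp [Tfun, hai]
  map_smul' c f := by
    funext x
    rcases x with ⟨l, hl⟩
    cases l with
    | nil => simp [Tfun]
    | cons a s => by_cases hai : a = i <;> simp [Tfun, hai]

/-- `S` raises the length filtration by `d`. -/
def Raises (d : ℕ) (S : E n p) : Prop :=
  ∀ (k : ℕ) (h : V n p), (∀ x : D n p, x.1.length < k → h x = 0) →
    ∀ x : D n p, x.1.length < k + d → S h x = 0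

variable {n p}

lemma raises_mono {d d' : ℕ} {S : E n p} (hd : d' ≤ d) (hS : Raises n p d S) :
    Raises n p d' S := fun k h hh x hx => hS k h hh x (lt_of_lt_of_le hx (by omega))

lemma raises_zero (d : ℕ) : Raises n p d (0 : E n p) := by
  intro k h hh x hx; simp

lemma raises_add {d : ℕ} {S S' : E n p} (hS : Raises n p d S) (hS' : Raises n p d S') :
    Raises n p d (S + S') := by
  intro k h hh x hx
  have := hS k h hh x hx
  have := hS' k h hh x hx
  simp_all

lemma raises_neg {d : ℕ} {S : E n p} (hS : Raises n p d S) : Raises n p d (-S) := by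
  intro k h hh x hx
  have := hS k h hh x hx
  simp_all

lemma raises_sub {d : ℕ} {S S' : E n p} (hS : Raises n p d S) (hS' : Raises n p d S') :
    Raises n p d (S - S') := by
  rw [sub_eq_add_neg]; exact raises_add hS (raises_neg hS')

lemma raises_smul {d : ℕ} (c : ZMod p) {S : E n p} (hS : Raises n p d S) :
    Raises n p d (c • S) := by
  intro k h hh x hx
  have := hS k h hh x hx
  simp_all

lemma raises_mul {a b : ℕ} {S S' : E n p} (hS : Raises n p a S) (hS' : Raises n p b S') :
    Raises n p (a + b) (S * S') := by
  intro k h hh x hx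
  rw [Module.End.mul_apply]
  refine hS (k + b) (S' h) (fun y hy => hS' k h hh y hy) x ?_
  omega

lemma raises_one : Raises n p 0 (1 : E n p) := by
  intro k h hh x hx
  simpa using hh x (by omega)

lemma raises_pow {S : E n p} (hS : Raises n p 1 S) (m : ℕ) (hm : 1 ≤ m) :
    Raises n p m (S ^ m) := by
  induction m with
  | zero => omega
  | succ m ih =>
    rcases Nat.eq_or_lt_of_le hm with h1 | h1
    · simpa [← h1] using (by simpa using hS : Raises n p 1 (S^1))
    · have := raises_mul (ih (by omega)) hS
      simpa [pow_succ] using this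

lemma raises_sum {d : ℕ} {ι : Type*} (s : Finset ι) (f : ι → E n p)
    (hf : ∀ i ∈ s, Raises n p d (f i)) : Raises n p d (∑ i ∈ s, f i) := by
  classical
  induction s using Finset.induction with
  | empty => simpa using raises_zero d
  | insert _ _ hx ih =>
    rw [Finset.sum_insert hx]
    exact raises_add (hf _ (Finset.mem_insert_self _ _))
      (ih fun i hi => hf i (Finset.mem_insert_of_mem hi))

lemma eq_zero_of_raises {d : ℕ} {S : E n p} (hd : p ^ n + 1 ≤ d) (hS : Raises n p d S) :
    S = 0 := by
  apply LinearMap.ext; intro f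
  funext x
  have := hS 0 f (fun y hy => absurd hy (by omega)) x (by have := x.2; omega)
  simpa using this

lemma raises_T (i : Fin n) : Raises n p 1 (T n p i) := by
  intro k h hh x hx
  rcases x with ⟨l, hl⟩
  cases l with
  | nil => simp [T, Tfun]
  | cons a s =>
    show Tfun n p i h (a :: s) hl = 0
    rw [Tfun]
    split
    · exact hh _ (by simpa [List.length_cons] using Nat.lt_of_succ_lt_succ (by simpa using hx))
    · rfl



section Units

lemma q_pos : 1 ≤ p ^ n := Nat.one_le_two_pow.trans_eq rfl |>.trans (by
  exact Nat.pow_le_pow_left (Nat.Prime.two_le hp.out) n) |>.trans (le_refl _)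

noncomputable def uinv (S : E n p) : E n p := ∑ j ∈ Finset.range (p ^ n + 1), (-S) ^ j

lemma neg_pow_top {S : E n p} (hS : Raises n p 1 S) : (-S) ^ (p ^ n + 1) = 0 :=
  eq_zero_of_raises (le_refl _) (raises_pow (raises_neg hS) _ (by omega))

lemma uinv_mul {S : E n p} (hS : Raises n p 1 S) : uinv S * (1 + S) = 1 := by
  have h := geom_sum_mul (-S : E n p) (p ^ n + 1)
  rw [neg_pow_top hS] at h
  have h' : uinv S * -(1 + S) = -1 := by
    have e : (-S - 1 : E n p) = -(1 + S) := by abel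
    simpa [uinv, e] using h
  rw [← neg_neg (uinv S * (1 + S)), ← mul_neg, h', neg_neg]

lemma commute_uinv (S : E n p) : Commute (1 + S) (uinv S) := by
  refine Commute.add_left (Commute.one_left _) ?_
  refine Commute.sum_right _ _ _ (fun j _ => ?_)
  exact ((Commute.refl S).neg_right).pow_right j

lemma mul_uinv {S : E n p} (hS : Raises n p 1 S) : (1 + S) * uinv S = 1 := by
  rw [(commute_uinv S).eq]; exact uinv_mul hS

noncomputable def unitOf {S : E n p} (hS : Raises n p 1 S) : (E n p)ˣ :=
  ⟨1 + S, uinv S, mul_uinv hS, uinv_mul hS⟩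

lemma uinv_sub_one {S : E n p} (hS : Raises n p 1 S) : Raises n p 1 (uinv S - 1) := by
  have : uinv S = (∑ j ∈ Finset.range (p ^ n), (-S) ^ (j + 1)) + (-S) ^ 0 :=
    Finset.sum_range_succ' _ _
  rw [this]
  simpa using raises_sum _ _ fun j _ => raises_mono (by omega)
    (raises_pow (raises_neg hS) (j+1) (by omega))

lemma uinv_sub_one_add {S : E n p} (hS : Raises n p 1 S) : Raises n p 2 (uinv S - 1 + S) := by
  have h1 : uinv S = (∑ j ∈ Finset.range (p ^ n), (-S) ^ (j + 1)) + (-S) ^ 0 :=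
    Finset.sum_range_succ' _ _
  have hq : p ^ n = (p ^ n - 1) + 1 := by have := q_pos (n := n) (p := p); omega
  have h2 : (∑ j ∈ Finset.range (p ^ n), (-S) ^ (j + 1))
      = (∑ j ∈ Finset.range (p ^ n - 1), (-S) ^ (j + 1 + 1)) + (-S) ^ (0 + 1) := by
    conv_lhs => rw [hq]
    exact Finset.sum_range_succ' (fun j => (-S) ^ (j + 1)) _
  have h3 : uinv S - 1 + S = ∑ j ∈ Finset.range (p ^ n - 1), (-S) ^ (j + 1 + 1) := by
    rw [h1, h2]
    simp only [zero_add, pow_zero, pow_one]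
    abel
  rw [h3]
  exact raises_sum _ _ fun j _ => raises_mono (by omega)
    (raises_pow (raises_neg hS) (j+1+1) (by omega))

variable (n p) in
noncomputable def GHat : Subgroup (E n p)ˣ where
  carrier := {u | Raises n p 1 ((u : E n p) - 1)}
  one_mem' := by simpa using raises_zero 1
  mul_mem' := by
    intro u v hu hv
    show Raises n p 1 (((u * v : (E n p)ˣ) : E n p) - 1)
    have e : ((u * v : (E n p)ˣ) : E n p) - 1
        = (((u : E n p) - 1) + ((v : E n p) - 1)) + ((u : E n p) - 1) * ((v : E n p) - 1) := by
      rw [Units.val_mul]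
      simp only [mul_sub, sub_mul, mul_one, one_mul]
      abel
    rw [e]
    exact raises_add (raises_add hu hv) (raises_mono (by omega) (raises_mul hu hv))
  inv_mem' := by
    intro u hu
    show Raises n p 1 (((u⁻¹ : (E n p)ˣ) : E n p) - 1)
    have hinv : ((u⁻¹ : (E n p)ˣ) : E n p) = uinv ((u : E n p) - 1) := by
      apply Units.inv_eq_of_mul_eq_one_right
      have h1 := mul_uinv hu
      rwa [show (1 : E n p) + ((u : E n p) - 1) = (u : E n p) by abel] at h1
    rw [hinv]
    exact uinv_sub_one hu

lemma mem_GHat_iff {u : (E n p)ˣ} : u ∈ GHat n p ↔ Raises n p 1 ((u : E n p) - 1) := Iff.rfl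

variable (n p) in
noncomputable def gen (i : Fin n) : ↥(GHat n p) :=
  ⟨unitOf (raises_T i), by simpa [mem_GHat_iff, unitOf] using raises_T i⟩

variable (n p) in
noncomputable def thetaHat : FreeGroup (Fin n) →* ↥(GHat n p) := FreeGroup.lift (gen n p)

variable (n p) in
noncomputable def alphaMap : FreeGroup (Fin n) →* Multiplicative (Fin n → ZMod p) :=
  FreeGroup.lift (fun i => Multiplicative.ofAdd (Pi.single i 1))

variable (n p) in
noncomputable def alphav (x : FreeGroup (Fin n)) : Fin n → ZMod p :=
  Multiplicative.toAdd (alphaMap n p x)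

lemma alphav_one : alphav n p 1 = 0 := by simp [alphav]

lemma alphav_of (i : Fin n) : alphav n p (FreeGroup.of i) = Pi.single i 1 := by
  simp [alphav, alphaMap]

lemma alphav_mul (x y : FreeGroup (Fin n)) :
    alphav n p (x * y) = alphav n p x + alphav n p y := by
  simp [alphav, map_mul]

lemma alphav_inv (x : FreeGroup (Fin n)) : alphav n p x⁻¹ = -alphav n p x := by
  simp [alphav, map_inv]

variable (n p) in
noncomputable def ell (α : Fin n → ZMod p) : E n p := ∑ i, α i • T n p i

lemma ell_zero : ell n p 0 = 0 := by simp [ell]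

lemma ell_add (α β : Fin n → ZMod p) : ell n p (α + β) = ell n p α + ell n p β := by
  simp [ell, add_smul, Finset.sum_add_distrib]

lemma ell_neg (α : Fin n → ZMod p) : ell n p (-α) = -ell n p α := by
  rw [ell, ell, ← Finset.sum_neg_distrib]
  refine Finset.sum_congr rfl fun i _ => ?_
  rw [Pi.neg_apply]
  exact neg_smul (α i) (T n p i)

lemma ell_single (i : Fin n) : ell n p (Pi.single i 1) = T n p i := by
  classical
  rw [ell]
  rw [Finset.sum_eq_single i]
  · simp
  · intro j _ hj; simp [Pi.single_apply, hj]
  · intro hi; exact absurd (Finset.mem_univ i) hi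

lemma raises_ell (α : Fin n → ZMod p) : Raises n p 1 (ell n p α) :=
  raises_sum _ _ fun i _ => raises_smul _ (raises_T i)

/-- The key structure lemma: `Θ(x) ≡ 1 + ℓ_{α(x)}` modulo filtration degree 2. -/
theorem theta_structure (x : FreeGroup (Fin n)) :
    Raises n p 2 (((thetaHat n p x : (E n p)ˣ) : E n p) - 1 - ell n p (alphav n p x)) := by
  induction x using FreeGroup.induction_on with
  | C1 =>
    rw [show ((1 : FreeGroup (Fin n))) = 1 from rfl]
    simpa [alphav_one, ell_zero] using raises_zero 2
  | of i =>
    have : thetaHat n p (FreeGroup.of i) = gen n p i := FreeGroup.lift_apply_of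
    rw [this, alphav_of, ell_single]
    simpa [gen, unitOf] using raises_zero 2
  | inv_of i _ =>
    rw [map_inv]
    have hof : thetaHat n p (FreeGroup.of i) = gen n p i := FreeGroup.lift_apply_of
    rw [hof, alphav_inv, alphav_of, ell_neg, ell_single]
    have hval2 : ((((gen n p i)⁻¹ : ↥(GHat n p)) : (E n p)ˣ) : E n p) = uinv (T n p i) := rfl
    rw [hval2]
    have := uinv_sub_one_add (raises_T (n := n) (p := p) i)
    simpa [sub_neg_eq_add, sub_eq_add_neg, add_comm, add_left_comm, add_assoc] using this
  | mul x y hx hy =>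
    rw [map_mul, alphav_mul, ell_add]
    set ux := ((thetaHat n p x : (E n p)ˣ) : E n p)
    set uy := ((thetaHat n p y : (E n p)ˣ) : E n p)
    have hux : Raises n p 1 (ux - 1) := (thetaHat n p x).2
    have huy : Raises n p 1 (uy - 1) := (thetaHat n p y).2
    have hval : ((((thetaHat n p x) * (thetaHat n p y) : ↥(GHat n p)) : (E n p)ˣ) : E n p)
        = ux * uy := rfl
    rw [hval]
    have key : ux * uy - 1 - (ell n p (alphav n p x) + ell n p (alphav n p y))
        = (ux - 1 - ell n p (alphav n p x)) + (uy - 1 - ell n p (alphav n p y))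
          + (ux - 1) * (uy - 1) := by
      simp only [mul_sub, sub_mul, mul_one, one_mul]
      abel
    rw [key]
    exact raises_add (raises_add hx hy) (raises_mul hux huy)

instance : Nonempty (D n p) := ⟨⟨[], by simp⟩⟩

instance : CharP (E n p) p := by
  apply charP_of_injective_algebraMap (R := ZMod p)
  intro a b hab
  have h1 := congrFun (congrArg (fun (S : E n p) => S (fun _ => (1 : ZMod p)))
    hab) (Classical.arbitrary (D n p))
  simpa [Algebra.algebraMap_eq_smul_one] using h1

lemma pow_perturb {L Er : E n p} (hL : Raises n p 1 L) (hE : Raises n p 2 Er) (m : ℕ) :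
    Raises n p (m + 1) ((L + Er) ^ m - L ^ m) := by
  induction m with
  | zero => simpa using raises_zero 1
  | succ m ih =>
    have key : (L + Er) ^ (m + 1) - L ^ (m + 1)
        = ((L + Er) ^ m - L ^ m) * L + ((L + Er) ^ m - L ^ m) * Er + (L ^ m * Er) := by
      rw [pow_succ, pow_succ]
      simp only [sub_mul, mul_add]
      abel
    rw [key]
    have h1 : Raises n p (m + 2) (((L + Er) ^ m - L ^ m) * L) := raises_mul (a := m + 1) (b := 1) ih hL
    have h2 : Raises n p (m + 2) (((L + Er) ^ m - L ^ m) * Er) :=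
      raises_mono (by omega) (raises_mul (a := m + 1) (b := 2) ih hE)
    have h3 : Raises n p (m + 2) (L ^ m * Er) := by
      rcases Nat.eq_zero_or_pos m with hm | hm
      · subst hm; simpa using raises_mono (by omega) hE
      · exact raises_mono (by omega) (raises_mul (raises_pow hL m hm) hE)
    exact raises_add (raises_add h1 h2) h3

lemma raises_pow_sub_one {u : E n p} (hu : Raises n p 1 (u - 1)) (m : ℕ) :
    (u : E n p) ^ (p ^ m) = 1 + (u - 1) ^ (p ^ m) := by
  have comm : Commute (1 : E n p) (u - 1) := Commute.one_left _
  calc u ^ (p ^ m) = (1 + (u - 1)) ^ (p ^ m) := by rw [add_sub_cancel]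
  _ = 1 ^ (p ^ m) + (u - 1) ^ (p ^ m) := add_pow_char_pow_of_commute p m comm
  _ = 1 + (u - 1) ^ (p ^ m) := by rw [one_pow]

/-- `Θ(x)^q = 1 + ℓ_{α(x)}^q` where `q = pⁿ`. -/
theorem theta_pow_q (x : FreeGroup (Fin n)) :
    (((thetaHat n p x : (E n p)ˣ) : E n p)) ^ (p ^ n)
      = 1 + (ell n p (alphav n p x)) ^ (p ^ n) := by
  set u := ((thetaHat n p x : (E n p)ˣ) : E n p)
  have hu : Raises n p 1 (u - 1) := (thetaHat n p x).2
  rw [raises_pow_sub_one hu n]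
  congr 1
  set L := ell n p (alphav n p x)
  have hres : Raises n p 2 (u - 1 - L) := theta_structure x
  have hdecomp : u - 1 = L + (u - 1 - L) := by abel
  have := pow_perturb (raises_ell (alphav n p x)) hres (p ^ n)
  rw [← hdecomp] at this
  have hz : (u - 1) ^ (p ^ n) - L ^ (p ^ n) = 0 :=
    eq_zero_of_raises (by omega) this
  have := sub_eq_zero.mp hz
  rw [this]

theorem theta_pow_qp (x : FreeGroup (Fin n)) : (thetaHat n p x) ^ (p ^ n * p) = 1 := by
  have hval : (((thetaHat n p x : (E n p)ˣ) : E n p)) ^ (p ^ n * p) = 1 := by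
    rw [pow_mul, theta_pow_q]
    set L := ell n p (alphav n p x)
    have comm : Commute (1 : E n p) (L ^ (p ^ n)) := Commute.one_left _
    rw [add_pow_char_of_commute _ comm, one_pow, ← pow_mul]
    have : (L : E n p) ^ (p ^ n * p) = 0 := by
      apply eq_zero_of_raises (d := p ^ n * p) ?_ (raises_pow (raises_ell _) _ ?_)
      · have h2 := hp.out.two_le
        have h1 : 1 ≤ p ^ n := q_pos
        nlinarith
      · have h2 := hp.out.two_le
        have h1 : 1 ≤ p ^ n := q_pos
        nlinarith
    rw [this, add_zero]
  have h2 : (((thetaHat n p x) ^ (p ^ n * p) : ↥(GHat n p)) : (E n p)ˣ) = 1 := by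
    rw [SubgroupClass.coe_pow]
    apply Units.ext
    rw [Units.val_pow_eq_pow_val, Units.val_one]
    exact hval
  exact Subtype.ext h2

end Units

section Chi

variable (n p) in
abbrev K : Type := GaloisField p (p ^ n)

lemma qnz : (p ^ n : ℕ) ≠ 0 := by have : 1 ≤ p ^ n := q_pos; omega

lemma n_le_q : n ≤ p ^ n := le_of_lt (Nat.lt_pow_self (n := n) hp.out.one_lt)

noncomputable instance : Fintype (K n p) := Fintype.ofFinite _

variable (n p) in
noncomputable def bq : Module.Basis (Fin (p ^ n)) (ZMod p) (K n p) :=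
  (Module.finBasis (ZMod p) (K n p)).reindex (finCongr (GaloisField.finrank p qnz))

variable (n p) in
noncomputable def bb (i : Fin n) : K n p := bq n p (Fin.castLE n_le_q i)

variable (n p) in
noncomputable def e0 : V n p := fun x => if x.1.length = 0 then 1 else 0

lemma one_mem_extend : (1 : K n p) ∈
    (LinearIndepOn.singleton (R := ZMod p) (v := id) (one_ne_zero (α := K n p))).extend
      (Set.subset_univ _) :=
  LinearIndepOn.subset_extend _ _ rfl

variable (n p) in
noncomputable def thetaF : K n p →ₗ[ZMod p] ZMod p :=
  (Module.Basis.extend (LinearIndepOn.singleton (R := ZMod p) (v := id)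
    (one_ne_zero (α := K n p)))).coord ⟨1, one_mem_extend⟩

lemma thetaF_one : thetaF n p 1 = 1 := by
  rw [thetaF]
  have h : Module.Basis.extend (LinearIndepOn.singleton (R := ZMod p) (v := id)
      (one_ne_zero (α := K n p))) ⟨1, one_mem_extend⟩ = (1 : K n p) :=
    Module.Basis.extend_apply_self _ _
  have h2 := (Module.Basis.extend (LinearIndepOn.singleton (R := ZMod p) (v := id)
    (one_ne_zero (α := K n p)))).repr_self ⟨1, one_mem_extend⟩
  rw [h] at h2
  rw [Module.Basis.coord_apply, h2]
  simp

lemma thetaF_alg (c : ZMod p) : thetaF n p (algebraMap (ZMod p) (K n p) c) = c := by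
  rw [Algebra.algebraMap_eq_smul_one, map_smul, thetaF_one, smul_eq_mul, mul_one]

variable (n p) in
noncomputable def chiK (S : E n p) : K n p :=
  ∑ w : Fin (p ^ n) → Fin n,
    (S (e0 n p) ⟨List.ofFn w, by simp⟩) •
      ∏ j : Fin (p ^ n), bb n p (w j) ^ p ^ (j : ℕ)

variable (n p) in
noncomputable def chi (S : E n p) : ZMod p := thetaF n p (chiK n p S)

lemma chiK_add (S S' : E n p) : chiK n p (S + S') = chiK n p S + chiK n p S' := by
  rw [chiK, chiK, chiK, ← Finset.sum_add_distrib]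
  refine Finset.sum_congr rfl fun w _ => ?_
  rw [← add_smul]
  congr 1

lemma chi_add (S S' : E n p) : chi n p (S + S') = chi n p S + chi n p S' := by
  rw [chi, chi, chi, chiK_add, map_add]

lemma chi_zero : chi n p 0 = 0 := by
  have : chiK n p 0 = 0 := by
    rw [chiK]
    apply Finset.sum_eq_zero
    intro w _
    simp
  rw [chi, this, map_zero]

lemma ell_pow_e0 (α : Fin n → ZMod p) (m : ℕ) (x : D n p) :
    ((ell n p α) ^ m) (e0 n p) x = if x.1.length = m then (x.1.map α).prod else 0 := by
  induction m generalizing x with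
  | zero =>
    rcases x with ⟨l, hl⟩
    cases l with
    | nil => simp [e0]
    | cons a s => simp [e0]
  | succ m ih =>
    rw [pow_succ']
    rw [Module.End.mul_apply]
    rcases x with ⟨l, hl⟩
    have happ : ∀ (h : V n p) (y : D n p), (ell n p α) h y = ∑ i, α i * (T n p i h y) := by
      intro h y
      rw [ell, LinearMap.sum_apply]
      simp [smul_eq_mul]
    rw [happ]
    cases l with
    | nil =>
      have : ∀ i, α i * (T n p i (((ell n p α) ^ m) (e0 n p)) ⟨[], hl⟩) = 0 := by
        intro i; simp [T, Tfun]
      rw [Finset.sum_congr rfl (fun i _ => this i)]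
      simp
    | cons a s =>
      have hs : s.length ≤ p ^ n := Nat.le_of_succ_le hl
      have hT : ∀ i, (T n p i (((ell n p α) ^ m) (e0 n p)) ⟨a :: s, hl⟩)
          = if a = i then (((ell n p α) ^ m) (e0 n p)) ⟨s, hs⟩ else 0 := by
        intro i; rfl
      rw [Finset.sum_congr rfl (fun i _ => by rw [hT i])]
      rw [Finset.sum_eq_single a]
      · rw [if_pos rfl, ih ⟨s, hs⟩]
        by_cases hsl : s.length = m
        · rw [if_pos hsl, if_pos (by simp [hsl])]
          simp
        · rw [if_neg hsl, if_neg (by simp [hsl])]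
          simp
      · intro i _ hia
        rw [if_neg (fun h => hia h.symm), mul_zero]
      · intro h; exact absurd (Finset.mem_univ a) h

variable (n p) in
noncomputable def ahat (α : Fin n → ZMod p) : K n p := ∑ i, α i • bb n p i

lemma zmod_pow_pow (c : ZMod p) (j : ℕ) : c ^ (p ^ j) = c := by
  induction j with
  | zero => simp
  | succ j ih => rw [pow_succ, pow_mul, ih, ZMod.pow_card]

lemma chiK_ell_pow (α : Fin n → ZMod p) :
    chiK n p ((ell n p α) ^ (p ^ n)) = (ahat n p α) ^ (∑ j ∈ Finset.range (p ^ n), p ^ j) := by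
  classical
  have h1 : chiK n p ((ell n p α) ^ (p ^ n))
      = ∑ w : Fin (p ^ n) → Fin n,
          (∏ j : Fin (p ^ n), α (w j)) • ∏ j : Fin (p ^ n), bb n p (w j) ^ p ^ (j : ℕ) := by
    rw [chiK]
    refine Finset.sum_congr rfl fun w _ => ?_
    rw [ell_pow_e0]
    rw [if_pos (by simp)]
    congr 1
    rw [List.map_ofFn, List.prod_ofFn]
    rfl
  have h2 : ∀ w : Fin (p ^ n) → Fin n,
      (∏ j : Fin (p ^ n), α (w j)) • ∏ j : Fin (p ^ n), bb n p (w j) ^ p ^ (j : ℕ)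
      = ∏ j : Fin (p ^ n), (α (w j) • bb n p (w j) ^ p ^ (j : ℕ)) := by
    intro w
    rw [Algebra.smul_def, map_prod, ← Finset.prod_mul_distrib]
    refine Finset.prod_congr rfl fun j _ => ?_
    rw [← Algebra.smul_def]
  rw [h1, Finset.sum_congr rfl (fun w _ => h2 w)]
  have h3 := Finset.prod_univ_sum (fun _ : Fin (p ^ n) => (Finset.univ : Finset (Fin n)))
    (fun j i => α i • bb n p i ^ p ^ (j : ℕ))
  rw [Fintype.piFinset_univ] at h3
  rw [← h3]
  have h4 : ∀ j : Fin (p ^ n), (∑ i, α i • bb n p i ^ p ^ (j : ℕ))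
      = (ahat n p α) ^ p ^ (j : ℕ) := by
    intro j
    rw [ahat, sum_pow_char_pow]
    refine Finset.sum_congr rfl fun i _ => ?_
    rw [smul_pow, zmod_pow_pow]
  rw [Finset.prod_congr rfl (fun j _ => h4 j)]
  rw [Finset.prod_pow_eq_pow_sum]
  congr 1
  exact Fin.sum_univ_eq_sum_range _ _

lemma ahat_ne_zero {α : Fin n → ZMod p} (hα : α ≠ 0) : ahat n p α ≠ 0 := by
  intro h
  apply hα
  have hli : LinearIndependent (ZMod p) (bb n p) :=
    (bq n p).linearIndependent.comp _ (Fin.castLE_injective n_le_q)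
  have := Fintype.linearIndependent_iff.mp hli α (by rw [← ahat]; exact h)
  funext i
  exact this i

lemma geom_nat (r : ℕ) : ∀ m : ℕ, (∑ j ∈ Finset.range m, (r + 1) ^ j) * r + 1 = (r + 1) ^ m := by
  intro m
  induction m with
  | zero => simp
  | succ m ih =>
    calc (∑ j ∈ Finset.range (m + 1), (r + 1) ^ j) * r + 1
        = ((∑ j ∈ Finset.range m, (r + 1) ^ j) * r + 1) + (r + 1) ^ m * r := by
          rw [Finset.sum_range_succ, add_mul]; ring
    _ = (r + 1) ^ m + (r + 1) ^ m * r := by rw [ih]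
    _ = (r + 1) ^ (m + 1) := by rw [pow_succ]; ring

lemma card_K : Fintype.card (K n p) = p ^ (p ^ n) := by
  rw [← Nat.card_eq_fintype_card]
  exact GaloisField.card p _ qnz

lemma mem_prime_field {y : K n p} (hy : y ^ p = y) :
    ∃ c : ZMod p, algebraMap (ZMod p) (K n p) c = y := by
  classical
  by_contra hc
  push_neg at hc
  set f : Polynomial (K n p) := Polynomial.X ^ p - Polynomial.X with hf
  have hf0 : f ≠ 0 := FiniteField.X_pow_card_sub_X_ne_zero _ hp.out.one_lt
  have hdeg : f.natDegree = p := FiniteField.X_pow_card_sub_X_natDegree_eq _ hp.out.one_lt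
  set s : Finset (K n p) := Finset.univ.image (algebraMap (ZMod p) (K n p)) with hsdef
  have hscard : s.card = p := by
    rw [hsdef, Finset.card_image_of_injective _ (algebraMap (ZMod p) (K n p)).injective,
      Finset.card_univ, ZMod.card]
  have hys : y ∉ s := by
    intro hmem
    obtain ⟨c, _, hcy⟩ := Finset.mem_image.mp hmem
    exact hc c hcy
  have hsub : insert y s ⊆ f.roots.toFinset := by
    intro z hz
    rw [Multiset.mem_toFinset, Polynomial.mem_roots hf0]
    have hz' : z ^ p = z := by
      rcases Finset.mem_insert.mp hz with h | h
      · subst h; exact hy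
      · obtain ⟨c, _, rfl⟩ := Finset.mem_image.mp h
        rw [← map_pow, ZMod.pow_card]
    show f.IsRoot z
    rw [hf]
    simp [Polynomial.IsRoot, hz']
  have h1 : p + 1 ≤ (f.roots.toFinset).card := by
    have := Finset.card_le_card hsub
    rwa [Finset.card_insert_of_notMem hys, hscard] at this
  have h2 : (f.roots.toFinset).card ≤ p :=
    le_trans (Multiset.toFinset_card_le _)
      (le_trans (Polynomial.card_roots' f) (le_of_eq hdeg))
  omega

/-- Anisotropy: the character is nonzero on `ℓ_α^q` whenever `α ≠ 0`. -/
theorem chi_ell_ne_zero {α : Fin n → ZMod p} (hα : α ≠ 0) :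
    chi n p ((ell n p α) ^ (p ^ n)) ≠ 0 := by
  rw [chi, chiK_ell_pow]
  set a := ahat n p α
  have ha : a ≠ 0 := ahat_ne_zero hα
  set N₁ := ∑ j ∈ Finset.range (p ^ n), p ^ j with hN
  set y := a ^ N₁ with hy
  have hy0 : y ≠ 0 := pow_ne_zero _ ha
  have hcard : Fintype.card (K n p) = p ^ (p ^ n) := card_K
  have hr : p = (p - 1) + 1 := by have := hp.out.two_le; omega
  have hgeom : N₁ * (p - 1) + 1 = p ^ (p ^ n) := by
    have := geom_nat (p - 1) (p ^ n)
    rw [← hr] at this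
    rw [hN]
    omega
  have hyp1 : y ^ (p - 1) = 1 := by
    rw [hy, ← pow_mul]
    have : a ^ (N₁ * (p - 1)) = a ^ (Fintype.card (K n p) - 1) := by
      congr 1
      omega
    rw [this]
    exact FiniteField.pow_card_sub_one_eq_one a ha
  have hyp : y ^ p = y := by
    have h5 : y ^ ((p - 1) + 1) = y := by rw [pow_succ, hyp1, one_mul]
    rwa [← hr] at h5
  obtain ⟨c, hcy⟩ := mem_prime_field hyp
  have hc0 : c ≠ 0 := by
    intro h
    rw [h, map_zero] at hcy
    exact hy0 hcy.symm
  rw [← hcy, thetaF_alg]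
  exact hc0

end Chi

section Zeta

variable (p) in
noncomputable abbrev R : Type := AdjoinRoot (Polynomial.cyclotomic p ℤ)

noncomputable instance : IsDomain (R p) :=
  AdjoinRoot.isDomain_of_prime
    ((UniqueFactorizationMonoid.irreducible_iff_prime).mp
      (Polynomial.cyclotomic.irreducible hp.out.pos))

variable (p) in
noncomputable def zeta : R p := AdjoinRoot.root _

lemma zeta_pow_p : (zeta p) ^ p = 1 := by
  have h : (AdjoinRoot.mk (Polynomial.cyclotomic p ℤ))
      (Polynomial.X ^ p - 1) = (zeta p) ^ p - 1 := by
    rw [map_sub, map_pow, map_one, AdjoinRoot.mk_X, zeta]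
  have h2 : (Polynomial.X ^ p - 1 : Polynomial ℤ)
      = Polynomial.cyclotomic p ℤ * (Polynomial.X - 1) :=
    (Polynomial.cyclotomic_prime_mul_X_sub_one ℤ p).symm
  have h3 : (AdjoinRoot.mk (Polynomial.cyclotomic p ℤ)) (Polynomial.X ^ p - 1) = 0 := by
    rw [h2, map_mul, AdjoinRoot.mk_self, zero_mul]
  have := h.symm.trans h3
  linear_combination this

lemma zeta_ne_one : zeta p ≠ 1 := by
  intro h
  have hm : (AdjoinRoot.mk (Polynomial.cyclotomic p ℤ))
      (Polynomial.X - 1) = 0 := by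
    rw [map_sub, AdjoinRoot.mk_X, map_one, ← zeta, h, sub_self]
  have hdvd : Polynomial.cyclotomic p ℤ ∣ (Polynomial.X - 1) :=
    AdjoinRoot.mk_eq_zero.mp hm
  have hX1 : (Polynomial.X - 1 : Polynomial ℤ) ≠ 0 := by
    intro hX
    have := congrArg (Polynomial.eval 0) hX
    simp at this
  have hd := Polynomial.natDegree_le_of_dvd hdvd hX1
  rw [Polynomial.natDegree_cyclotomic, Nat.totient_prime hp.out] at hd
  have hdX : (Polynomial.X - 1 : Polynomial ℤ).natDegree ≤ 1 := by
    have := Polynomial.natDegree_X_sub_C (1 : ℤ)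
    simp only [Polynomial.C_1] at this
    omega
  have hp2 : p = 2 := by have := hp.out.two_le; omega
  subst hp2
  rw [Polynomial.cyclotomic_two] at hdvd
  have := Polynomial.eval_dvd (x := (-1 : ℤ)) hdvd
  simp at this

lemma orderOf_zeta : orderOf (zeta p) = p := orderOf_eq_prime zeta_pow_p zeta_ne_one

variable (p) in
noncomputable def zp (c : ZMod p) : R p := (zeta p) ^ c.val

lemma zp_zero : zp p 0 = 1 := by
  rw [zp]
  have : (0 : ZMod p).val = 0 := ZMod.val_zero
  rw [this, pow_zero]

lemma zp_add (a b : ZMod p) : zp p (a + b) = zp p a * zp p b := by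
  have hne : NeZero p := ⟨hp.out.ne_zero⟩
  have h0 := pow_mod_orderOf (zeta p) (a.val + b.val)
  rw [orderOf_zeta] at h0
  rw [zp, zp, zp, ZMod.val_add, h0, pow_add]

lemma zp_ne_one {c : ZMod p} (hc : c ≠ 0) : zp p c ≠ 1 := by
  intro h
  have hdvd : orderOf (zeta p) ∣ c.val := orderOf_dvd_of_pow_eq_one h
  rw [orderOf_zeta] at hdvd
  have hne : NeZero p := ⟨hp.out.ne_zero⟩
  have hlt : c.val < p := ZMod.val_lt c
  have hv : c.val ≠ 0 := fun h0 => hc (by rwa [← ZMod.val_eq_zero])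
  have := Nat.le_of_dvd (Nat.pos_of_ne_zero hv) hdvd
  omega

noncomputable instance : Module.Free ℤ (R p) :=
  Module.Free.of_basis (AdjoinRoot.powerBasis' (Polynomial.cyclotomic.monic p ℤ)).basis

lemma intCast_inj_R {k : ℤ} (hk : (k : R p) = 0) : k = 0 := by
  have pb := AdjoinRoot.powerBasis' (Polynomial.cyclotomic.monic p ℤ)
  have h1 : (k : R p) = k • (1 : R p) := by
    rw [zsmul_eq_mul, mul_one]
  rw [h1] at hk
  have h2 := congrArg pb.basis.repr hk
  rw [map_zsmul, map_zero] at h2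
  have h3 : pb.basis.repr 1 ≠ 0 := by
    intro h
    have := pb.basis.repr.injective (by rw [h, map_zero] : pb.basis.repr 1 = pb.basis.repr 0)
    exact one_ne_zero this
  obtain ⟨i, hi⟩ : ∃ i, pb.basis.repr 1 i ≠ 0 := by
    by_contra hall
    push_neg at hall
    exact h3 (Finsupp.ext hall)
  have h4 := congrFun (congrArg DFunLike.coe h2) i
  simp only [Finsupp.coe_zero, Pi.zero_apply, Finsupp.coe_smul, Pi.smul_apply,
    smul_eq_mul] at h4
  rcases mul_eq_zero.mp h4 with h | h
  · exact h
  · exact absurd h hi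

lemma zsmul_eq_zero_R {k : ℤ} {x : R p} (h : k • x = 0) : k = 0 ∨ x = 0 := by
  rw [zsmul_eq_mul] at h
  rcases mul_eq_zero.mp h with h | h
  · exact Or.inl (intCast_inj_R h)
  · exact Or.inr h

end Zeta

section Lattice

instance : Finite (E n p) :=
  Finite.of_injective (fun (S : E n p) => (S : V n p → V n p)) DFunLike.coe_injective

instance : Finite ((E n p)ˣ) := Finite.of_injective Units.val (fun _ _ h => Units.ext h)

lemma SS_zero {S : E n p} (hS : Raises n p (p ^ n) S) : S * S = 0 :=
  eq_zero_of_raises (by have : 1 ≤ p ^ n := q_pos; omega) (raises_mul hS hS)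

noncomputable def zunit (S : E n p) (hS : Raises n p (p ^ n) S) : ↥(GHat n p) :=
  ⟨⟨1 + S, 1 - S,
    by rw [mul_sub, mul_one, add_mul, one_mul, SS_zero hS]; abel,
    by rw [mul_add, mul_one, sub_mul, one_mul, SS_zero hS]; abel⟩,
    by
      show Raises n p 1 ((1 + S) - 1)
      simpa using raises_mono q_pos hS⟩

lemma mul_ghat_raises {S : E n p} (hS : Raises n p (p ^ n) S) (u : ↥(GHat n p)) :
    S * (((u : (E n p)ˣ) : E n p) - 1) = 0 ∧ (((u : (E n p)ˣ) : E n p) - 1) * S = 0 := by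
  constructor
  · exact eq_zero_of_raises (by have : 1 ≤ p ^ n := q_pos; omega) (raises_mul hS u.2)
  · exact eq_zero_of_raises (by have : 1 ≤ p ^ n := q_pos; omega)
      (raises_mul (a := 1) (b := p ^ n) u.2 hS)

lemma zunit_mul_val {S : E n p} (hS : Raises n p (p ^ n) S) (u : ↥(GHat n p)) :
    (((zunit S hS * u : ↥(GHat n p)) : (E n p)ˣ) : E n p)
      = ((u : (E n p)ˣ) : E n p) + S := by
  have h1 := (mul_ghat_raises hS u).1
  show (1 + S) * ((u : (E n p)ˣ) : E n p) = _
  set uv := ((u : (E n p)ˣ) : E n p)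
  have h2 : S * uv = S := by
    have : S * uv - S = S * (uv - 1) := by rw [mul_sub, mul_one]
    have h3 : S * uv - S = 0 := by rw [this, h1]
    exact sub_eq_zero.mp h3
  rw [add_mul, one_mul, h2]

lemma mul_zunit_val {S : E n p} (hS : Raises n p (p ^ n) S) (u : ↥(GHat n p)) :
    (((u * zunit S hS : ↥(GHat n p)) : (E n p)ˣ) : E n p)
      = ((u : (E n p)ˣ) : E n p) + S := by
  have h1 := (mul_ghat_raises hS u).2
  show ((u : (E n p)ˣ) : E n p) * (1 + S) = _
  set uv := ((u : (E n p)ˣ) : E n p)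
  have h2 : uv * S = S := by
    have : uv * S - S = (uv - 1) * S := by rw [sub_mul, one_mul]
    have h3 : uv * S - S = 0 := by rw [this, h1]
    exact sub_eq_zero.mp h3
  rw [mul_add, mul_one, h2]

lemma zunit_comm {S : E n p} (hS : Raises n p (p ^ n) S) (u : ↥(GHat n p)) :
    zunit S hS * u = u * zunit S hS := by
  apply Subtype.ext; apply Units.ext
  have := (zunit_mul_val hS u).trans (mul_zunit_val hS u).symm
  exact_mod_cast this

variable (n p) in
noncomputable def LL : Submodule ℤ (↥(GHat n p) → R p) where
  carrier := {F | ∀ (S : E n p) (hS : Raises n p (p ^ n) S) (u : ↥(GHat n p)),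
    F (zunit S hS * u) = zp p (chi n p S) * F u}
  add_mem' := by
    intro F G hF hG S hS u
    simp only [Pi.add_apply, hF S hS u, hG S hS u, mul_add]
  zero_mem' := by intro S hS u; simp
  smul_mem' := by
    intro k F hF S hS u
    simp only [Pi.smul_apply, hF S hS u, mul_smul_comm]

open scoped Classical in
variable (n p) in
noncomputable def F0 : ↥(GHat n p) → R p := fun u =>
  if h : Raises n p (p ^ n) (((u : (E n p)ˣ) : E n p) - 1)
  then zp p (chi n p (((u : (E n p)ˣ) : E n p) - 1)) else 0

lemma F0_mem : F0 n p ∈ LL n p := by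
  intro S hS u
  have hval : (((zunit S hS * u : ↥(GHat n p)) : (E n p)ˣ) : E n p) - 1
      = (((u : (E n p)ˣ) : E n p) - 1) + S := by
    rw [zunit_mul_val hS u]; abel
  classical
  simp only [F0]
  rw [hval]
  by_cases hu : Raises n p (p ^ n) (((u : (E n p)ˣ) : E n p) - 1)
  · rw [dif_pos (raises_add hu hS), dif_pos hu]
    rw [chi_add, zp_add, mul_comm]
  · rw [dif_neg hu, dif_neg ?_, mul_zero]
    intro hcon
    exact hu (by simpa using raises_sub hcon hS)

lemma F0_one : F0 n p 1 = 1 := by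
  classical
  simp only [F0]
  have h1 : (((1 : ↥(GHat n p)) : (E n p)ˣ) : E n p) - 1 = 0 := by
    simp
  rw [dif_pos (by rw [h1]; exact raises_zero _)]
  rw [h1, chi_zero, zp_zero]

lemma F0_ne_zero : F0 n p ≠ 0 := by
  intro h
  have := congrFun h 1
  rw [F0_one] at this
  simp at this

variable (n p) in
noncomputable def tauA (u : ↥(GHat n p)) : (↥(GHat n p) → R p) →ₗ[ℤ] (↥(GHat n p) → R p) where
  toFun F := fun g => F (g * u)
  map_add' F G := rfl
  map_smul' k F := rfl

lemma tauA_mem (u : ↥(GHat n p)) {F : ↥(GHat n p) → R p} (hF : F ∈ LL n p) :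
    tauA n p u F ∈ LL n p := by
  intro S hS g
  show F ((zunit S hS * g) * u) = zp p (chi n p S) * F (g * u)
  rw [mul_assoc]
  exact hF S hS (g * u)

variable (n p) in
noncomputable def tau (u : ↥(GHat n p)) : ↥(LL n p) →ₗ[ℤ] ↥(LL n p) :=
  (tauA n p u).restrict (fun F hF => tauA_mem u hF)

lemma tau_apply_coe (u : ↥(GHat n p)) (F : ↥(LL n p)) (g : ↥(GHat n p)) :
    ((tau n p u F) : ↥(GHat n p) → R p) g = (F : ↥(GHat n p) → R p) (g * u) := rfl

lemma tau_comp (u v : ↥(GHat n p)) (F : ↥(LL n p)) :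
    tau n p u (tau n p v F) = tau n p (u * v) F := by
  apply Subtype.ext
  funext g
  rw [tau_apply_coe, tau_apply_coe, tau_apply_coe, mul_assoc]

lemma tau_one (F : ↥(LL n p)) : tau n p 1 F = F := by
  apply Subtype.ext
  funext g
  rw [tau_apply_coe, mul_one]

/-- Fixed-point freeness on `L` for images of `p`-primitive elements. -/
lemma fixed_eq_zero {x : FreeGroup (Fin n)} (hx : alphav n p x ≠ 0)
    {F : ↥(LL n p)} (hF : tau n p (thetaHat n p x) F = F) : F = 0 := by
  have hiter : ∀ m : ℕ, tau n p ((thetaHat n p x) ^ m) F = F := by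
    intro m
    induction m with
    | zero => rw [pow_zero]; exact tau_one F
    | succ m ih =>
      rw [pow_succ, ← tau_comp, hF, ih]
  have hq := hiter (p ^ n)
  set Sx := (ell n p (alphav n p x)) ^ (p ^ n) with hSxdef
  have hSx : Raises n p (p ^ n) Sx := raises_pow (raises_ell _) _ q_pos
  have hz : (thetaHat n p x) ^ (p ^ n) = zunit Sx hSx := by
    apply Subtype.ext; apply Units.ext
    rw [SubgroupClass.coe_pow, Units.val_pow_eq_pow_val]
    exact theta_pow_q x
  rw [hz] at hq
  have hchi : chi n p Sx ≠ 0 := chi_ell_ne_zero hx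
  apply Subtype.ext
  funext g
  have h1 : (F : ↥(GHat n p) → R p) (g * zunit Sx hSx) = (F : ↥(GHat n p) → R p) g :=
    congrFun (congrArg Subtype.val hq) g
  rw [← zunit_comm hSx g] at h1
  rw [F.2 Sx hSx g] at h1
  have h2 : (zp p (chi n p Sx) - 1) * (F : ↥(GHat n p) → R p) g = 0 := by
    rw [sub_mul, one_mul, h1, sub_self]
  rcases mul_eq_zero.mp h2 with h | h
  · exact absurd (by linear_combination h : zp p (chi n p Sx) = 1) (zp_ne_one hchi)
  · simpa using h

end Lattice

section AffineGroup

variable (n p) in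
structure Aff where
  A : ↥(GHat n p)
  v : ↥(LL n p)

lemma Aff.ext' {a b : Aff n p} (h1 : a.A = b.A) (h2 : a.v = b.v) : a = b := by
  cases a; cases b; cases h1; cases h2; rfl

noncomputable instance : Mul (Aff n p) := ⟨fun a b => ⟨a.A * b.A, a.v + tau n p a.A b.v⟩⟩
noncomputable instance : One (Aff n p) := ⟨⟨1, 0⟩⟩
noncomputable instance : Inv (Aff n p) := ⟨fun a => ⟨a.A⁻¹, - tau n p a.A⁻¹ a.v⟩⟩

lemma aff_mul_A (a b : Aff n p) : (a * b).A = a.A * b.A := rfl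
lemma aff_mul_v (a b : Aff n p) : (a * b).v = a.v + tau n p a.A b.v := rfl
lemma aff_one_A : (1 : Aff n p).A = 1 := rfl
lemma aff_one_v : (1 : Aff n p).v = 0 := rfl

noncomputable instance : Group (Aff n p) where
  mul_assoc a b c := by
    apply Aff.ext'
    · simp only [aff_mul_A, mul_assoc]
    · simp only [aff_mul_v, aff_mul_A, map_add, tau_comp]
      abel
  one_mul a := by
    apply Aff.ext'
    · simp only [aff_mul_A, aff_one_A, one_mul]
    · simp only [aff_mul_v, aff_one_v, aff_one_A, tau_one, zero_add]
  mul_one a := by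
    apply Aff.ext'
    · simp only [aff_mul_A, aff_one_A, mul_one]
    · simp only [aff_mul_v, aff_one_v, map_zero, add_zero]
  inv_mul_cancel a := by
    apply Aff.ext'
    · simp only [aff_mul_A, aff_one_A]
      show a.A⁻¹ * a.A = 1
      exact inv_mul_cancel a.A
    · show - tau n p a.A⁻¹ a.v + tau n p a.A⁻¹ a.v = 0
      abel

variable (n p) in
noncomputable def vgen (i : Fin n) : ↥(LL n p) :=
  if (i : ℕ) = 0 then ⟨F0 n p, F0_mem⟩ else 0

variable (n p) in
noncomputable def sigma : FreeGroup (Fin n) →* Aff n p :=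
  FreeGroup.lift (fun i => ⟨gen n p i, vgen n p i⟩)

variable (n p) in
noncomputable def Aproj : Aff n p →* ↥(GHat n p) where
  toFun := Aff.A
  map_one' := rfl
  map_mul' _ _ := rfl

lemma Aproj_sigma (x : FreeGroup (Fin n)) : (sigma n p x).A = thetaHat n p x := by
  have h : (Aproj n p).comp (sigma n p) = thetaHat n p := by
    apply FreeGroup.ext_hom
    intro i
    show ((sigma n p) (FreeGroup.of i)).A = thetaHat n p (FreeGroup.of i)
    rw [sigma, FreeGroup.lift_apply_of, thetaHat, FreeGroup.lift_apply_of]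
  exact DFunLike.congr_fun h x

variable (n p) in
noncomputable def tv (x : FreeGroup (Fin n)) : ↥(LL n p) := (sigma n p x).v

lemma tv_mul (x y : FreeGroup (Fin n)) :
    tv n p (x * y) = tv n p x + tau n p (thetaHat n p x) (tv n p y) := by
  rw [tv, map_mul, aff_mul_v, Aproj_sigma, ← tv, ← tv]

lemma tv_of (i : Fin n) : tv n p (FreeGroup.of i) = vgen n p i := by
  rw [tv, sigma, FreeGroup.lift_apply_of]

lemma aff_pow_A (a : Aff n p) (m : ℕ) : (a ^ m).A = a.A ^ m := by
  induction m with
  | zero => rw [pow_zero, pow_zero]; rfl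
  | succ m ih => rw [pow_succ, pow_succ, aff_mul_A, ih]

lemma aff_pow_v (a : Aff n p) (m : ℕ) :
    (a ^ m).v = ∑ j ∈ Finset.range m, tau n p (a.A ^ j) a.v := by
  induction m with
  | zero => rw [pow_zero, Finset.range_zero, Finset.sum_empty]; rfl
  | succ m ih =>
    rw [pow_succ, aff_mul_v, ih, aff_pow_A, Finset.sum_range_succ]

theorem sigma_pow_eq_one {x : FreeGroup (Fin n)} (hx : alphav n p x ≠ 0) :
    (sigma n p x) ^ (p ^ n * p) = 1 := by
  apply Aff.ext'
  · rw [aff_pow_A, Aproj_sigma, aff_one_A]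
    exact theta_pow_qp x
  · rw [aff_pow_v, aff_one_v, Aproj_sigma]
    set u := thetaHat n p x with hu
    set w := (sigma n p x).v with hw
    set M := p ^ n * p with hM
    set Sm := ∑ j ∈ Finset.range M, tau n p (u ^ j) w with hSm
    have hfix : tau n p u Sm = Sm := by
      rw [hSm, map_sum]
      have h1 : ∀ j, tau n p u (tau n p (u ^ j) w) = tau n p (u ^ (j + 1)) w := by
        intro j
        rw [tau_comp, ← pow_succ']
      rw [Finset.sum_congr rfl (fun j _ => h1 j)]
      have h2 := Finset.sum_range_succ' (fun j => tau n p (u ^ j) w) M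
      have h3 := Finset.sum_range_succ (fun j => tau n p (u ^ j) w) M
      have h4 : tau n p (u ^ M) w = tau n p (u ^ 0) w := by
        rw [hM, theta_pow_qp x, pow_zero]
      rw [h3, h4] at h2
      have h5 := add_right_cancel h2.symm
      rw [h5]
    exact fixed_eq_zero hx hfix

theorem sigma_isOfFinOrder {x : FreeGroup (Fin n)} (hx : alphav n p x ≠ 0) :
    IsOfFinOrder (sigma n p x) := by
  rw [isOfFinOrder_iff_pow_eq_one]
  refine ⟨p ^ n * p, ?_, sigma_pow_eq_one hx⟩
  have h1 : 1 ≤ p ^ n := q_pos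
  have h2 := hp.out.two_le
  positivity

end AffineGroup

section EndAff

variable (n p) in
noncomputable def EndAff (a : Aff n p) : Module.End ℤ (↥(LL n p) × ℤ) :=
  LinearMap.prod
    ((tau n p a.A).comp (LinearMap.fst ℤ (↥(LL n p)) ℤ)
      + (LinearMap.snd ℤ (↥(LL n p)) ℤ).smulRight a.v)
    (LinearMap.snd ℤ (↥(LL n p)) ℤ)

lemma EndAff_apply (a : Aff n p) (Fc : ↥(LL n p) × ℤ) :
    EndAff n p a Fc = (tau n p a.A Fc.1 + Fc.2 • a.v, Fc.2) := rfl

lemma EndAff_one : EndAff n p 1 = 1 := by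
  apply LinearMap.ext
  intro Fc
  rw [EndAff_apply, aff_one_A, aff_one_v, smul_zero, add_zero, tau_one]
  rfl

lemma EndAff_mul (a b : Aff n p) : EndAff n p (a * b) = EndAff n p a * EndAff n p b := by
  apply LinearMap.ext
  intro Fc
  rw [Module.End.mul_apply, EndAff_apply, EndAff_apply, EndAff_apply]
  refine Prod.ext ?_ rfl
  show tau n p (a * b).A Fc.1 + Fc.2 • (a * b).v
    = tau n p a.A (tau n p b.A Fc.1 + Fc.2 • b.v) + Fc.2 • a.v
  rw [aff_mul_A, aff_mul_v, map_add, map_smul, tau_comp, smul_add]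
  abel

variable (n p) in
noncomputable def PsiU : Aff n p →* (Module.End ℤ (↥(LL n p) × ℤ))ˣ where
  toFun a := ⟨EndAff n p a, EndAff n p a⁻¹,
    by rw [← EndAff_mul, mul_inv_cancel, EndAff_one],
    by rw [← EndAff_mul, inv_mul_cancel, EndAff_one]⟩
  map_one' := by
    apply Units.ext
    show EndAff n p 1 = 1
    exact EndAff_one
  map_mul' a b := by
    apply Units.ext
    show EndAff n p (a * b) = EndAff n p a * EndAff n p b
    exact EndAff_mul a b

lemma PsiU_apply_01 (a : Aff n p) :
    ((PsiU n p a : Module.End ℤ (↥(LL n p) × ℤ)) (0, 1)) = (a.v, 1) := by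
  show EndAff n p a (0, 1) = (a.v, 1)
  rw [EndAff_apply]
  norm_num

end EndAff

section Primitive

variable (n) in
noncomputable def expFG : FreeGroup (Fin n) →* Multiplicative (Fin n →₀ ℤ) :=
  FreeGroup.lift (fun i => Multiplicative.ofAdd (Finsupp.single i 1))

variable (n) in
noncomputable def secH : (Fin n →₀ ℤ) →+ Additive (Abelianization (FreeGroup (Fin n))) :=
  Finsupp.liftAddHom (fun i =>
    (zmultiplesHom _) (Additive.ofMul (Abelianization.of (FreeGroup.of i))))

lemma sec_exp (z : FreeGroup (Fin n)) :
    secH n (Multiplicative.toAdd (expFG n z))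
      = Additive.ofMul (Abelianization.of z) := by
  induction z using FreeGroup.induction_on with
  | C1 =>
    have h1 : (secH n) (Multiplicative.toAdd (expFG n 1)) = 0 := by
      rw [map_one]
      exact map_zero _
    rw [h1, map_one, ofMul_one]
  | of i =>
    have h1 : expFG n (FreeGroup.of i) = Multiplicative.ofAdd (Finsupp.single i 1) :=
      FreeGroup.lift_apply_of
    rw [h1, toAdd_ofAdd,
      secH, Finsupp.liftAddHom_apply_single]
    show (1 : ℤ) • Additive.ofMul (Abelianization.of (FreeGroup.of i)) = _
    rw [one_zsmul]
  | inv_of i ih =>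
    rw [map_inv, toAdd_inv, map_neg, ih, map_inv, ofMul_inv]
  | mul x y hx hy =>
    rw [map_mul, toAdd_mul, map_add, hx, hy, map_mul, ofMul_mul]

lemma alphav_eq_cast (x : FreeGroup (Fin n)) (i : Fin n) :
    alphav n p x i = (((Multiplicative.toAdd (expFG n x)) i : ℤ) : ZMod p) := by
  classical
  set h1 : FreeGroup (Fin n) →* Multiplicative (ZMod p) :=
    (AddMonoidHom.toMultiplicative (Pi.evalAddMonoidHom (fun _ : Fin n => ZMod p) i)).comp
      (alphaMap n p) with hh1
  set h2 : FreeGroup (Fin n) →* Multiplicative (ZMod p) :=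
    (AddMonoidHom.toMultiplicative ((Int.castAddHom (ZMod p)).comp
      (Finsupp.applyAddHom i))).comp (expFG n) with hh2
  have hext : h1 = h2 := by
    apply FreeGroup.ext_hom
    intro j
    rw [hh1, hh2]
    simp only [MonoidHom.comp_apply]
    rw [alphaMap, FreeGroup.lift_apply_of, expFG, FreeGroup.lift_apply_of]
    have hkey : (Pi.single j (1 : ZMod p) : Fin n → ZMod p) i = (((Finsupp.single j (1 : ℤ)) i : ℤ) : ZMod p) := by
      rw [Pi.single_apply, Finsupp.single_apply]
      by_cases hji : j = i
      · subst hji; simp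
      · rw [if_neg (fun h => hji h.symm), if_neg hji]; simp
    exact congrArg Multiplicative.ofAdd hkey
  have := DFunLike.congr_fun hext x
  rw [hh1, hh2] at this
  simp only [MonoidHom.comp_apply] at this
  have h3 := congrArg Multiplicative.toAdd this
  exact h3

lemma tensor_eq_zero_of_alphav_zero {x : FreeGroup (Fin n)} (h0 : alphav n p x = 0) :
    ((1 : ZMod p) ⊗ₜ[ℤ] Additive.ofMul (Abelianization.of x) :
      ZMod p ⊗[ℤ] Additive (Abelianization (FreeGroup (Fin n)))) = 0 := by
  classical
  set m := Multiplicative.toAdd (expFG n x) with hm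
  have hdvd : ∀ i, (p : ℤ) ∣ m i := by
    intro i
    have hi := congrFun h0 i
    rw [alphav_eq_cast] at hi
    exact_mod_cast (ZMod.intCast_zmod_eq_zero_iff_dvd _ _).mp hi
  set m' : Fin n →₀ ℤ := Finsupp.mapRange (fun t => t / p) (by simp) m with hm'
  have hsm : (p : ℤ) • m' = m := by
    ext i
    rw [Finsupp.smul_apply, hm', Finsupp.mapRange_apply, smul_eq_mul]
    exact Int.mul_ediv_cancel' (hdvd i)
  have hofmul : Additive.ofMul (Abelianization.of x) = (p : ℤ) • (secH n m') := by
    rw [← sec_exp x, ← hm, ← hsm, map_zsmul]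
  rw [hofmul, TensorProduct.tmul_smul, TensorProduct.smul_tmul']
  have hps : ((p : ℤ) • (1 : ZMod p)) = 0 := by
    rw [zsmul_eq_mul, mul_one]
    exact_mod_cast ZMod.natCast_self p
  rw [hps, TensorProduct.zero_tmul]

end Primitive

section Main

theorem main (hn : 2 ≤ n) :
    ∃ (d : ℕ) (ρ : FreeGroup (Fin n) →* GL (Fin d) ℤ), 1 ≤ d ∧
      (Set.range ρ).Infinite ∧
      ∀ x : FreeGroup (Fin n), IsPPrimitive p x → IsOfFinOrder (ρ x) := by
  classical
  haveI : Fintype ↥(GHat n p) := Fintype.ofFinite _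
  set pb := AdjoinRoot.powerBasis' (Polynomial.cyclotomic.monic p ℤ) with hpb
  set bAmb : Module.Basis ((_ : ↥(GHat n p)) × Fin pb.dim) ℤ (↥(GHat n p) → R p) :=
    Pi.basis (fun _ => pb.basis) with hbAmb
  obtain ⟨nL, bL⟩ := Submodule.basisOfPid bAmb (LL n p)
  set bprod := bL.prod (Module.Basis.singleton (Fin 1) ℤ) with hbprod
  set bfin := bprod.reindex finSumFinEquiv with hbfin
  set matE := LinearMap.toMatrixAlgEquiv bfin with hmatE
  set psimul : (Module.End ℤ (↥(LL n p) × ℤ))ˣ ≃* (Matrix (Fin (nL + 1)) (Fin (nL + 1)) ℤ)ˣ :=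
    Units.mapEquiv matE.toRingEquiv.toMulEquiv with hpsi
  set ρ : FreeGroup (Fin n) →* (Matrix (Fin (nL + 1)) (Fin (nL + 1)) ℤ)ˣ :=
    (psimul.toMonoidHom.comp (PsiU n p)).comp (sigma n p) with hrho
  refine ⟨nL + 1, ρ, by omega, ?_, ?_⟩
  · -- infinite image
    have key : ∃ y : FreeGroup (Fin n), thetaHat n p y = 1 ∧ tv n p y ≠ 0 := by
      by_contra hno
      push_neg at hno
      haveI : Fintype ↥((thetaHat n p).range) := Fintype.ofFinite _
      set Q := (thetaHat n p).range with hQ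
      have hrepex : ∀ g : ↥Q, ∃ x, thetaHat n p x = (g : ↥(GHat n p)) := fun g => g.2
      choose rep hrepeq using hrepex
      set c : ↥Q → ↥(LL n p) := fun g => tv n p (rep g) with hc
      have hwd : ∀ (g : ↥Q) (x : FreeGroup (Fin n)),
          thetaHat n p x = (g : ↥(GHat n p)) → tv n p x = c g := by
        intro g x hxg
        have h1 : thetaHat n p (x * (rep g)⁻¹) = 1 := by
          rw [map_mul, map_inv, hxg, hrepeq, mul_inv_cancel]
        have h2 : x = (x * (rep g)⁻¹) * rep g := by group
        calc tv n p x = tv n p ((x * (rep g)⁻¹) * rep g) := by rw [← h2]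
        _ = tv n p (x * (rep g)⁻¹)
            + tau n p (thetaHat n p (x * (rep g)⁻¹)) (tv n p (rep g)) := tv_mul _ _
        _ = tv n p (rep g) := by rw [hno _ h1, h1, tau_one, zero_add]
        _ = c g := rfl
      have hcoc : ∀ g h : ↥Q, c (g * h) = c g + tau n p ((g : ↥(GHat n p))) (c h) := by
        intro g h
        have hgh : thetaHat n p (rep g * rep h) = ((g * h : ↥Q) : ↥(GHat n p)) := by
          rw [map_mul, hrepeq, hrepeq]; rfl
        rw [← hwd (g * h) _ hgh, tv_mul, hrepeq g]
      set w0 : ↥(LL n p) := ∑ g : ↥Q, c g with hw0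
      have heq : ∀ g : ↥Q,
          w0 = (Fintype.card ↥Q) • c g + tau n p ((g : ↥(GHat n p))) w0 := by
        intro g
        have hsum : ∑ h : ↥Q, c (g * h) = w0 := by
          rw [hw0]
          exact Fintype.sum_bijective (fun h => g * h) (Group.mulLeft_bijective g) _ _
            (fun h => rfl)
        rw [Finset.sum_congr rfl (fun h _ => hcoc g h), Finset.sum_add_distrib,
          Finset.sum_const, Finset.card_univ, ← map_sum, ← hw0] at hsum
        exact hsum.symm
      set i0 : Fin n := ⟨0, by omega⟩ with hi0
      set i1 : Fin n := ⟨1, by omega⟩ with hi1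
      set g1 : ↥Q := ⟨thetaHat n p (FreeGroup.of i1), ⟨_, rfl⟩⟩ with hg1
      have hcg1 : c g1 = 0 := by
        rw [← hwd g1 (FreeGroup.of i1) rfl, tv_of, vgen, if_neg (by simp [hi1])]
      have hW : w0 = tau n p (thetaHat n p (FreeGroup.of i1)) w0 := by
        have h3 := heq g1
        rwa [hcg1, smul_zero, zero_add] at h3
      have halpha1 : alphav n p (FreeGroup.of i1) ≠ 0 := by
        rw [alphav_of]
        intro h
        have h4 := congrFun h i1
        rw [Pi.single_eq_same] at h4
        exact one_ne_zero h4
      have hw00 : w0 = 0 := fixed_eq_zero halpha1 hW.symm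
      set g0 : ↥Q := ⟨thetaHat n p (FreeGroup.of i0), ⟨_, rfl⟩⟩ with hg0
      have hcg0 : c g0 = ⟨F0 n p, F0_mem⟩ := by
        rw [← hwd g0 (FreeGroup.of i0) rfl, tv_of, vgen, if_pos rfl]
      have hzero := heq g0
      rw [hw00, map_zero, add_zero, hcg0] at hzero
      have hfun : (0 : ↥(GHat n p) → R p)
          = (Fintype.card ↥Q) • F0 n p := congrArg Subtype.val hzero
      have hat1 : (0 : R p) = (Fintype.card ↥Q) • F0 n p 1 := congrFun hfun 1
      rw [F0_one] at hat1
      have hz : ((Fintype.card ↥Q : ℤ)) • (1 : R p) = 0 := by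
        rw [natCast_zsmul]
        exact hat1.symm
      rcases zsmul_eq_zero_R hz with h | h
      · have : Fintype.card ↥Q = 0 := by exact_mod_cast h
        exact Fintype.card_ne_zero this
      · exact one_ne_zero h
    obtain ⟨y, hy1, hy2⟩ := key
    have hsig : ∀ k : ℕ, (sigma n p (y ^ k)).v = k • tv n p y := by
      intro k
      rw [map_pow, aff_pow_v]
      have hA : (sigma n p y).A = 1 := by rw [Aproj_sigma, hy1]
      rw [Finset.sum_congr rfl (fun j _ => by rw [hA, one_pow, tau_one])]
      rw [Finset.sum_const, Finset.card_range]
      rfl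
    obtain ⟨g, hg⟩ : ∃ g, (tv n p y : ↥(GHat n p) → R p) g ≠ 0 := by
      by_contra hall
      push_neg at hall
      exact hy2 (Subtype.ext (funext hall))
    refine Set.infinite_of_injective_forall_mem
      (f := fun k : ℕ => ρ (y ^ k)) ?_ (fun k => ⟨y ^ k, rfl⟩)
    intro k1 k2 hk
    have hinj1 : PsiU n p (sigma n p (y ^ k1)) = PsiU n p (sigma n p (y ^ k2)) :=
      psimul.injective hk
    have happ := congrArg
      (fun (u : (Module.End ℤ (↥(LL n p) × ℤ))ˣ) => (u : Module.End ℤ (↥(LL n p) × ℤ)) (0, 1))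
      hinj1
    simp only [PsiU_apply_01] at happ
    have hv : (sigma n p (y ^ k1)).v = (sigma n p (y ^ k2)).v :=
      congrArg Prod.fst happ
    rw [hsig k1, hsig k2] at hv
    have hcoord : (k1 : ℤ) • (tv n p y : ↥(GHat n p) → R p) g
        = (k2 : ℤ) • (tv n p y : ↥(GHat n p) → R p) g := by
      have h5 := congrFun (congrArg Subtype.val hv) g
      rw [natCast_zsmul, natCast_zsmul]
      exact h5
    have hsub : ((k1 : ℤ) - (k2 : ℤ)) • (tv n p y : ↥(GHat n p) → R p) g = 0 := by
      rw [sub_smul, hcoord, sub_self]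
    rcases zsmul_eq_zero_R hsub with h | h
    · have : (k1 : ℤ) = (k2 : ℤ) := by omega
      exact_mod_cast this
    · exact absurd h hg
  · -- finite order on p-primitives
    intro x hx
    have hα : alphav n p x ≠ 0 := by
      intro h0
      exact hx (tensor_eq_zero_of_alphav_zero h0)
    exact MonoidHom.isOfFinOrder (psimul.toMonoidHom.comp (PsiU n p))
      (sigma_isOfFinOrder hα)

end Main
end MPaux

/-- **Theorem G** (Malestein–Putman).  For all `n ≥ 2` and primes `p`, there is an integral
linear representation `ρ : F_n → GL_d(ℤ)` with infinite image such that `ρ(x)` has finite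
order for every `p`-primitive `x ∈ F_n`. -/
theorem exists_integral_rep_infinite_image_finite_order_on_pPrimitives
    (n p : ℕ) (hn : 2 ≤ n) (hp : p.Prime) :
    ∃ (d : ℕ) (ρ : FreeGroup (Fin n) →* GL (Fin d) ℤ), 1 ≤ d ∧
      (Set.range ρ).Infinite ∧
      ∀ x : FreeGroup (Fin n), IsPPrimitive p x → IsOfFinOrder (ρ x) := by
  haveI : Fact p.Prime := ⟨hp⟩
  exact MPaux.main hn
end

section
/- Let n ≥ 2, let R be a finite-index normal subgroup of the free group F_n, let 𝕜 be a field of characteristic 0, and let p be a prime. Set G = F_n/R with projection π : F_n → G. Assume there exists a nonzero 𝕜-linear representation V of G such that for every p-primitive element x ∈ F_n and every nonzero vector v ∈ V, the action of π(x) on V satisfies π(x)·v ≠ v. Then the ℚ-subspace of H₁(R;ℚ) spanned by the classes [x^k], for all p-primitive x ∈ F_n and all k ≥ 1 with x^k ∈ R, is a proper subspace of H₁(R;ℚ). -/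
open scoped TensorProduct

/-- The class of `r ∈ R` in `H₁(R; k) = k ⊗_ℤ (Abelianization of R)`. -/
noncomputable def h1Class (k : Type) [CommRing k] {Γ : Type*} [Group Γ] {R : Subgroup Γ}
    (r : R) : k ⊗[ℤ] Additive (Abelianization R) :=
  (1 : k) ⊗ₜ[ℤ] Additive.ofMul (Abelianization.of r)

section MPAux

variable {n : ℕ} {R : Subgroup (FreeGroup (Fin n))} [R.Normal]
variable {𝕜 : Type} [Field 𝕜] [CharZero 𝕜]
variable {V : Type} [AddCommGroup V] [Module 𝕜 V]

/-- A representation as multiplicative automorphisms of `Multiplicative V`. -/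
def MP.repAut (ρ : Representation 𝕜 (FreeGroup (Fin n) ⧸ R) V) :
    (FreeGroup (Fin n) ⧸ R) →* MulAut (Multiplicative V) where
  toFun g :=
  { toFun := fun v => Multiplicative.ofAdd (ρ g v.toAdd)
    invFun := fun v => Multiplicative.ofAdd (ρ g⁻¹ v.toAdd)
    left_inv := fun v => by
      simp only [toAdd_ofAdd]
      show Multiplicative.ofAdd ((ρ g⁻¹ * ρ g) v.toAdd) = v
      rw [← map_mul, inv_mul_cancel, map_one]; rfl
    right_inv := fun v => by
      simp only [toAdd_ofAdd]
      show Multiplicative.ofAdd ((ρ g * ρ g⁻¹) v.toAdd) = v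
      rw [← map_mul, mul_inv_cancel, map_one]; rfl
    map_mul' := fun v w => by
      simp only [toAdd_mul, map_add, ofAdd_add] }
  map_one' := by
    ext v
    show Multiplicative.ofAdd ((ρ 1) v.toAdd) = v
    rw [map_one]; rfl
  map_mul' g h := by
    ext v
    show Multiplicative.ofAdd ((ρ (g * h)) v.toAdd) = Multiplicative.ofAdd (ρ g (ρ h v.toAdd))
    rw [map_mul]; rfl

lemma MP.repAut_apply (ρ : Representation 𝕜 (FreeGroup (Fin n) ⧸ R) V)
    (g : FreeGroup (Fin n) ⧸ R) (v : Multiplicative V) :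
    MP.repAut ρ g v = Multiplicative.ofAdd (ρ g v.toAdd) := rfl

/-- The homomorphism into the semidirect product encoding a derivation with prescribed
values on generators. -/
noncomputable def MP.derHom (ρ : Representation 𝕜 (FreeGroup (Fin n) ⧸ R) V)
    (w : Fin n → V) :
    FreeGroup (Fin n) →* Multiplicative V ⋊[MP.repAut ρ] (FreeGroup (Fin n) ⧸ R) :=
  FreeGroup.lift fun i =>
    ⟨Multiplicative.ofAdd (w i), QuotientGroup.mk' R (FreeGroup.of i)⟩

lemma MP.derHom_right (ρ : Representation 𝕜 (FreeGroup (Fin n) ⧸ R) V)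
    (w : Fin n → V) (x : FreeGroup (Fin n)) :
    (MP.derHom ρ w x).right = QuotientGroup.mk' R x := by
  have : SemidirectProduct.rightHom.comp (MP.derHom ρ w) = QuotientGroup.mk' R := by
    apply FreeGroup.ext_hom
    intro i
    simp [MP.derHom]
  exact DFunLike.congr_fun this x

/-- The derivation `F_n → V` with values `w` on the generators. -/
noncomputable def MP.der (ρ : Representation 𝕜 (FreeGroup (Fin n) ⧸ R) V)
    (w : Fin n → V) (x : FreeGroup (Fin n)) : V :=
  (MP.derHom ρ w x).left.toAdd

lemma MP.der_mul (ρ : Representation 𝕜 (FreeGroup (Fin n) ⧸ R) V)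
    (w : Fin n → V) (x y : FreeGroup (Fin n)) :
    MP.der ρ w (x * y) = MP.der ρ w x + ρ (QuotientGroup.mk' R x) (MP.der ρ w y) := by
  unfold MP.der
  rw [map_mul, SemidirectProduct.mul_left, toAdd_mul, MP.derHom_right, MP.repAut_apply,
    toAdd_ofAdd]

lemma MP.der_one (ρ : Representation 𝕜 (FreeGroup (Fin n) ⧸ R) V) (w : Fin n → V) :
    MP.der ρ w 1 = 0 := by
  unfold MP.der
  rw [map_one]
  rfl

lemma MP.der_of (ρ : Representation 𝕜 (FreeGroup (Fin n) ⧸ R) V) (w : Fin n → V)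
    (i : Fin n) : MP.der ρ w (FreeGroup.of i) = w i := by
  unfold MP.der MP.derHom
  rw [FreeGroup.lift_apply_of]
  rfl

lemma MP.der_pure (ρ : Representation 𝕜 (FreeGroup (Fin n) ⧸ R) V) (w : Fin n → V)
    (i : Fin n) : MP.der ρ w (pure i) = w i := MP.der_of ρ w i

lemma MP.der_inv (ρ : Representation 𝕜 (FreeGroup (Fin n) ⧸ R) V) (w : Fin n → V)
    (x : FreeGroup (Fin n)) :
    MP.der ρ w x⁻¹ = - ρ (QuotientGroup.mk' R x⁻¹) (MP.der ρ w x) := by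
  have h := MP.der_mul ρ w x⁻¹ x
  rw [inv_mul_cancel, MP.der_one] at h
  exact eq_neg_of_add_eq_zero_left h.symm

lemma MP.der_add (ρ : Representation 𝕜 (FreeGroup (Fin n) ⧸ R) V) (v w : Fin n → V)
    (x : FreeGroup (Fin n)) :
    MP.der ρ (v + w) x = MP.der ρ v x + MP.der ρ w x := by
  induction x using FreeGroup.induction_on with
  | C1 => rw [MP.der_one, MP.der_one, MP.der_one, add_zero]
  | of i => rw [MP.der_of, MP.der_of, MP.der_of]; rfl
  | inv_of i ih =>
      rw [MP.der_inv, MP.der_inv, MP.der_inv, ih, map_add]; abel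
  | mul x y ihx ihy => rw [MP.der_mul, MP.der_mul, MP.der_mul, ihx, ihy, map_add]; abel

lemma MP.der_smul (ρ : Representation 𝕜 (FreeGroup (Fin n) ⧸ R) V) (a : 𝕜)
    (w : Fin n → V) (x : FreeGroup (Fin n)) :
    MP.der ρ (a • w) x = a • MP.der ρ w x := by
  induction x using FreeGroup.induction_on with
  | C1 => rw [MP.der_one, MP.der_one, smul_zero]
  | of i => rw [MP.der_of, MP.der_of]; rfl
  | inv_of i ih =>
      rw [MP.der_inv, MP.der_inv, ih, map_smul, smul_neg]
  | mul x y ihx ihy => rw [MP.der_mul, MP.der_mul, ihx, ihy, map_smul, smul_add]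

lemma MP.mk'_eq_one (x : FreeGroup (Fin n)) (h : x ∈ R) :
    QuotientGroup.mk' R x = 1 := (QuotientGroup.eq_one_iff x).mpr h

lemma MP.der_pow_fixed (ρ : Representation 𝕜 (FreeGroup (Fin n) ⧸ R) V)
    (w : Fin n → V) (x : FreeGroup (Fin n)) (k : ℕ) (h : x ^ k ∈ R) :
    ρ (QuotientGroup.mk' R x) (MP.der ρ w (x ^ k)) = MP.der ρ w (x ^ k) := by
  have h1 := MP.der_mul ρ w x (x ^ k)
  have h2 := MP.der_mul ρ w (x ^ k) x
  rw [← pow_succ'] at h1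
  rw [← pow_succ] at h2
  rw [MP.mk'_eq_one (x ^ k) h, map_one, Module.End.one_apply] at h2
  rw [h2, add_comm] at h1
  exact (add_left_cancel h1).symm

end MPAux

theorem MP.aux (n p : ℕ) (hn : 2 ≤ n)
    (R : Subgroup (FreeGroup (Fin n))) [R.Normal] [R.FiniteIndex]
    (𝕜 : Type) [Field 𝕜] [CharZero 𝕜]
    (V : Type) [AddCommGroup V] [Module 𝕜 V] [Nontrivial V] [FiniteDimensional 𝕜 V]
    (ρ : Representation 𝕜 (FreeGroup (Fin n) ⧸ R) V)
    (hfix : ∀ x : FreeGroup (Fin n), IsPPrimitive p x →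
      ∀ v : V, v ≠ 0 → ρ ((QuotientGroup.mk' R) x) v ≠ v) :
    Submodule.span ℚ
      {v : ℚ ⊗[ℤ] Additive (Abelianization R) |
        ∃ (x : FreeGroup (Fin n)) (k : ℕ) (h : x ^ k ∈ R),
          IsPPrimitive p x ∧ 1 ≤ k ∧ v = h1Class ℚ (⟨x ^ k, h⟩ : R)} ≠ ⊤ := by
  intro htop
  letI : Module ℚ V := Module.compHom V (algebraMap ℚ 𝕜)
  -- Step 1: under `htop`, every derivation vanishes on `R`.
  have hvanish : ∀ w : Fin n → V, ∀ r : R, MP.der ρ w (r : FreeGroup (Fin n)) = 0 := by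
    intro w
    have hπR : ∀ r : R, QuotientGroup.mk' R (r : FreeGroup (Fin n)) = 1 :=
      fun r => MP.mk'_eq_one _ r.2
    let dR : R →* Multiplicative V :=
    { toFun := fun r => Multiplicative.ofAdd (MP.der ρ w (r : FreeGroup (Fin n)))
      map_one' := by simp [MP.der_one]
      map_mul' := fun r s => by
        simp only [Subgroup.coe_mul]
        rw [MP.der_mul, hπR, map_one, Module.End.one_apply, ofAdd_add] }
    let A : Abelianization R →* Multiplicative V := Abelianization.lift dR
    let A' : Additive (Abelianization R) →+ V :=
    { toFun := fun m => (A m.toMul).toAdd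
      map_zero' := by
        show (A (1 : Abelianization R)).toAdd = 0
        rw [map_one]; rfl
      map_add' := fun a b => by
        show (A (a.toMul * b.toMul)).toAdd = _
        rw [map_mul]; rfl }
    let bil : ℚ →ₗ[ℤ] Additive (Abelianization R) →ₗ[ℤ] V :=
    { toFun := fun q => q • A'.toIntLinearMap
      map_add' := fun q q' => add_smul q q' _
      map_smul' := fun z q => by
        show ((z : ℤ) • q) • A'.toIntLinearMap = z • q • A'.toIntLinearMap
        rw [zsmul_eq_mul, mul_smul, Int.cast_smul_eq_zsmul] }
    let T := TensorProduct.lift bil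
    let L : (ℚ ⊗[ℤ] Additive (Abelianization R)) →ₗ[ℚ] V :=
    { toFun := T
      map_add' := T.map_add
      map_smul' := fun c x => map_rat_smul T c x }
    have hLclass : ∀ r : R, L (h1Class ℚ r) = MP.der ρ w (r : FreeGroup (Fin n)) := by
      intro r
      show T ((1 : ℚ) ⊗ₜ[ℤ] Additive.ofMul (Abelianization.of r)) = _
      rw [TensorProduct.lift.tmul]
      show (1 : ℚ) • A'.toIntLinearMap (Additive.ofMul (Abelianization.of r)) = _
      rw [one_smul]
      show (A (Abelianization.of r)).toAdd = _
      rw [Abelianization.lift_apply_of]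
      rfl
    have hker : Submodule.span ℚ
        {v : ℚ ⊗[ℤ] Additive (Abelianization R) |
          ∃ (x : FreeGroup (Fin n)) (k : ℕ) (h : x ^ k ∈ R),
            IsPPrimitive p x ∧ 1 ≤ k ∧ v = h1Class ℚ (⟨x ^ k, h⟩ : R)} ≤ LinearMap.ker L := by
      rw [Submodule.span_le]
      rintro v ⟨x, k, h, hprim, -, rfl⟩
      simp only [SetLike.mem_coe, LinearMap.mem_ker]
      rw [hLclass]
      by_contra hne
      exact hfix x hprim _ hne (MP.der_pow_fixed ρ w x k h)
    intro r
    have hr : L (h1Class ℚ r) = 0 := by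
      have : h1Class ℚ r ∈ LinearMap.ker L := hker (htop ▸ Submodule.mem_top)
      exact this
    rw [hLclass] at hr
    exact hr
  -- Step 2: counting argument.
  haveI : Finite (FreeGroup (Fin n) ⧸ R) := Subgroup.finite_quotient_of_finiteIndex
  haveI : Fintype (FreeGroup (Fin n) ⧸ R) := Fintype.ofFinite _
  have hcard : ((Fintype.card (FreeGroup (Fin n) ⧸ R) : 𝕜)) ≠ 0 :=
    Nat.cast_ne_zero.mpr Fintype.card_ne_zero
  let Ψ : (Fin n → V) →ₗ[𝕜] V :=
  { toFun := fun w => (Fintype.card (FreeGroup (Fin n) ⧸ R) : 𝕜)⁻¹ •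
      ∑ g : FreeGroup (Fin n) ⧸ R, MP.der ρ w (Quotient.out g)
    map_add' := fun v w => by
      simp only [MP.der_add, Finset.sum_add_distrib, smul_add]
    map_smul' := fun a w => by
      simp only [MP.der_smul, ← Finset.smul_sum, RingHom.id_apply]
      rw [smul_comm] }
  have hzero : ∀ w : Fin n → V, Ψ w = 0 → w = 0 := by
    intro w hΨ
    let f : (FreeGroup (Fin n) ⧸ R) → V := fun g => MP.der ρ w (Quotient.out g)
    have hf : ∀ g, f g = MP.der ρ w (Quotient.out g) := fun _ => rfl
    have houtR : ∀ x : FreeGroup (Fin n),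
        (Quotient.out (QuotientGroup.mk' R x))⁻¹ * x ∈ R := by
      intro x
      rw [← QuotientGroup.eq_one_iff]
      show (QuotientGroup.mk' R) _ = 1
      rw [map_mul, map_inv]
      have h5 : (QuotientGroup.mk' R) (Quotient.out (QuotientGroup.mk' R x)) =
          QuotientGroup.mk' R x := QuotientGroup.out_eq' _
      rw [h5, inv_mul_cancel]
    have hdx : ∀ x : FreeGroup (Fin n),
        MP.der ρ w x = f (QuotientGroup.mk' R x) := by
      intro x
      rw [hf]
      set y := Quotient.out ((QuotientGroup.mk' R) x) with hy0
      have hx : x = y * (y⁻¹ * x) := by group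
      calc MP.der ρ w x = MP.der ρ w (y * (y⁻¹ * x)) := by rw [← hx]
        _ = MP.der ρ w y + ρ (QuotientGroup.mk' R y) (MP.der ρ w (y⁻¹ * x)) :=
            MP.der_mul ρ w _ _
        _ = MP.der ρ w y := by
            rw [hvanish w ⟨y⁻¹ * x, houtR x⟩, map_zero, add_zero]
    have hcoc : ∀ g h : FreeGroup (Fin n) ⧸ R, f (g * h) = f g + ρ g (f h) := by
      intro g h
      have hg : (QuotientGroup.mk' R) (Quotient.out g) = g := QuotientGroup.out_eq' g
      have hh : (QuotientGroup.mk' R) (Quotient.out h) = h := QuotientGroup.out_eq' h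
      have e1 : MP.der ρ w (Quotient.out g * Quotient.out h) = f (g * h) := by
        rw [hdx (Quotient.out g * Quotient.out h), map_mul, hg, hh]
      rw [← e1, MP.der_mul, hg, hf g]
    have hS : ∀ g : FreeGroup (Fin n) ⧸ R,
        (∑ h : FreeGroup (Fin n) ⧸ R, f h) =
          Fintype.card (FreeGroup (Fin n) ⧸ R) • f g +
            ρ g (∑ h : FreeGroup (Fin n) ⧸ R, f h) := by
      intro g
      have h1 : (∑ h : FreeGroup (Fin n) ⧸ R, f (g * h)) =
          ∑ h : FreeGroup (Fin n) ⧸ R, f h :=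
        Fintype.sum_equiv (Equiv.mulLeft g) _ _ (fun h => rfl)
      calc (∑ h : FreeGroup (Fin n) ⧸ R, f h)
          = ∑ h : FreeGroup (Fin n) ⧸ R, f (g * h) := h1.symm
        _ = ∑ h : FreeGroup (Fin n) ⧸ R, (f g + ρ g (f h)) := by
            simp only [hcoc]
        _ = Fintype.card (FreeGroup (Fin n) ⧸ R) • f g +
            ρ g (∑ h : FreeGroup (Fin n) ⧸ R, f h) := by
            rw [Finset.sum_add_distrib, Finset.sum_const, map_sum]
            simp [Finset.card_univ]
    have hSzero : (∑ h : FreeGroup (Fin n) ⧸ R, f h) = 0 := by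
      have h0 : (Fintype.card (FreeGroup (Fin n) ⧸ R) : 𝕜)⁻¹ •
          (∑ h : FreeGroup (Fin n) ⧸ R, f h) = 0 := hΨ
      have h2 := congrArg
        (fun v => (Fintype.card (FreeGroup (Fin n) ⧸ R) : 𝕜) • v) h0
      simpa [smul_smul, mul_inv_cancel₀ hcard] using h2
    have hfzero : ∀ g : FreeGroup (Fin n) ⧸ R, f g = 0 := by
      intro g
      have h4 := hS g
      rw [hSzero, map_zero, add_zero] at h4
      have h3 : (Fintype.card (FreeGroup (Fin n) ⧸ R) : 𝕜) • f g = 0 := by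
        rw [Nat.cast_smul_eq_nsmul]
        exact h4.symm
      exact (smul_eq_zero.mp h3).resolve_left hcard
    funext i
    have := hdx (FreeGroup.of i)
    rw [MP.der_of, hfzero] at this
    exact this
  have hinj : Function.Injective Ψ := by
    intro a b hab
    have : Ψ (a - b) = 0 := by rw [map_sub, hab, sub_self]
    have := hzero _ this
    exact sub_eq_zero.mp this
  have h1 := LinearMap.finrank_le_finrank_of_injective hinj
  have h2 : Module.finrank 𝕜 (Fin n → V) = n * Module.finrank 𝕜 V := by
    rw [Module.finrank_pi_fintype 𝕜]
    simp [Finset.sum_const, Fintype.card_fin, mul_comm]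
  have h3 : 0 < Module.finrank 𝕜 V := Module.finrank_pos
  rw [h2] at h1
  nlinarith [h1, h3, hn]

/-- (Malestein–Putman, criterion for insufficiency of `p`-primitive homology.)
Let `R ⊴ F_n` be finite index with quotient `G`, let `𝕜` be a field of characteristic `0`,
and let `p` be prime.  If there is a nonzero `𝕜`-representation `V` of `G` such that the
image in `G` of every `p`-primitive element of `F_n` fixes no nonzero vector of `V`, then
the span in `H₁(R;ℚ)` of the classes `[x^k]` over `p`-primitive `x` and `k ≥ 1` with
`x^k ∈ R` is a proper subspace. -/
theorem pPrimitiveHomology_ne_top_of_rep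
    (n p : ℕ) (hn : 2 ≤ n) (hp : p.Prime)
    (R : Subgroup (FreeGroup (Fin n))) [R.Normal] [R.FiniteIndex]
    (𝕜 : Type) [Field 𝕜] [CharZero 𝕜]
    (V : Type) [AddCommGroup V] [Module 𝕜 V] [Nontrivial V]
    (ρ : Representation 𝕜 (FreeGroup (Fin n) ⧸ R) V)
    (hfix : ∀ x : FreeGroup (Fin n), IsPPrimitive p x →
      ∀ v : V, v ≠ 0 → ρ ((QuotientGroup.mk' R) x) v ≠ v) :
    Submodule.span ℚ
      {v : ℚ ⊗[ℤ] Additive (Abelianization R) |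
        ∃ (x : FreeGroup (Fin n)) (k : ℕ) (h : x ^ k ∈ R),
          IsPPrimitive p x ∧ 1 ≤ k ∧ v = h1Class ℚ (⟨x ^ k, h⟩ : R)} ≠ ⊤ := by
  obtain ⟨v₀, hv₀⟩ := exists_ne (0 : V)
  haveI : Finite (FreeGroup (Fin n) ⧸ R) := Subgroup.finite_quotient_of_finiteIndex
  set W : Submodule 𝕜 V :=
    Submodule.span 𝕜 (Set.range fun g : FreeGroup (Fin n) ⧸ R => ρ g v₀) with hW
  have hstab : ∀ g : FreeGroup (Fin n) ⧸ R, ∀ v ∈ W, ρ g v ∈ W := by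
    intro g v hv
    induction hv using Submodule.span_induction with
    | mem v hv =>
        obtain ⟨h, rfl⟩ := hv
        apply Submodule.subset_span
        exact ⟨g * h, by show ρ (g * h) v₀ = _; rw [map_mul]; rfl⟩
    | zero => rw [map_zero]; exact W.zero_mem
    | add a b _ _ iha ihb => rw [map_add]; exact W.add_mem iha ihb
    | smul a x _ ih => rw [map_smul]; exact W.smul_mem a ih
  haveI : FiniteDimensional 𝕜 W :=
    FiniteDimensional.span_of_finite 𝕜 (Set.finite_range _)
  have hv₀W : v₀ ∈ W := Submodule.subset_span ⟨1, by show ρ 1 v₀ = v₀; rw [map_one]; rfl⟩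
  haveI : Nontrivial W :=
    ⟨⟨⟨v₀, hv₀W⟩, 0, fun h => hv₀ (by simpa [Subtype.ext_iff] using h)⟩⟩
  let ρ' : Representation 𝕜 (FreeGroup (Fin n) ⧸ R) W :=
  { toFun := fun g => (ρ g).restrict (hstab g)
    map_one' := by
      ext v
      simp [LinearMap.restrict_coe_apply]
    map_mul' := fun g h => by
      ext v
      simp [LinearMap.restrict_coe_apply, Module.End.mul_apply] }
  have hfix' : ∀ x : FreeGroup (Fin n), IsPPrimitive p x →
      ∀ v : W, v ≠ 0 → ρ' ((QuotientGroup.mk' R) x) v ≠ v := by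
    intro x hx v hv0 hvfix
    apply hfix x hx v.val (by simpa [Submodule.coe_eq_zero] using hv0)
    have := congrArg Subtype.val hvfix
    simpa [ρ', LinearMap.restrict_coe_apply] using this
  exact MP.aux n p hn R 𝕜 W ρ' hfix'
end

section
/- Let p be a prime, let n ≥ 1, and let k ≥ 1 be an integer such that p^k > (p-1)(n-1). Let A = FreeAlgebra 𝔽_p (Fin n) be the free associative 𝔽_p-algebra on generators x_1, …, x_n (the images of the generators under the canonical inclusion ι). Then there exists an 𝔽_p-linear map Φ : A → 𝔽_p such that for every nonzero tuple (a_1, …, a_n) ∈ 𝔽_p^n, Φ((a_1 x_1 + ⋯ + a_n x_n)^{p^k}) ≠ 0. -/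
open Finset

def subdiag {R : Type*} [CommRing R] (q : ℕ) (c : ℕ → R) :
    Matrix (Fin (q+1)) (Fin (q+1)) R :=
  fun i j => if (i : ℕ) = (j : ℕ) + 1 then c j else 0

lemma subdiag_pow {R : Type*} [CommRing R] (q : ℕ) (c : ℕ → R) (m : ℕ)
    (i j : Fin (q+1)) :
    (subdiag q c ^ m) i j =
      if (i : ℕ) = (j : ℕ) + m then ∏ t ∈ Finset.range m, c ((j : ℕ) + t) else 0 := by
  induction m generalizing i j with
  | zero => simp [Matrix.one_apply, Fin.ext_iff, eq_comm]
  | succ m ih =>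
      rw [pow_succ, Matrix.mul_apply]
      simp only [ih, subdiag, ite_mul, zero_mul, mul_ite, mul_zero]
      by_cases h : (j : ℕ) + 1 ≤ q
      · rw [Finset.sum_eq_single (⟨(j : ℕ) + 1, Nat.lt_succ_of_le h⟩ : Fin (q+1))]
        · simp only [Fin.val_mk, if_true, eq_self_iff_true]
          by_cases hi : (i : ℕ) = (j : ℕ) + (m + 1)
          · rw [if_pos (by omega), if_pos hi, Finset.prod_range_succ']
            simp only [Nat.add_zero]
            congr 1
            exact Finset.prod_congr rfl (fun t _ => by congr 1; omega)
          · rw [if_neg (by omega), if_neg hi]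
        · intro x _ hx
          rw [if_neg (by simpa [Fin.ext_iff] using fun hh => hx (Fin.ext hh))]
        · simp
      · rw [Finset.sum_eq_zero, if_neg (by omega)]
        intro x _
        rw [if_neg (by omega)]

def Lform (p n q : ℕ) (i : Fin n) (t : ℕ) : Fin n → ZMod p :=
  if t < q - (p-1) * (i : ℕ) then Pi.single i 1
  else fun v =>
    (if (v : ℕ) = (t - (q - (p-1) * (i : ℕ))) / (p-1) then 1 else 0)
    - (((t - (q - (p-1) * (i : ℕ))) % (p-1) + 1 : ℕ) : ZMod p) * (if v = i then 1 else 0)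

noncomputable def rep (p n q : ℕ) (i : Fin n) :
    FreeAlgebra (ZMod p) (Fin n) →ₐ[ZMod p] Matrix (Fin (q+1)) (Fin (q+1)) (ZMod p) :=
  FreeAlgebra.lift _ (fun v => subdiag q (fun t => Lform p n q i t v))

def entryL (p q : ℕ) : Matrix (Fin (q+1)) (Fin (q+1)) (ZMod p) →ₗ[ZMod p] ZMod p where
  toFun M := M (Fin.last q) 0
  map_add' _ _ := rfl
  map_smul' _ _ := rfl

lemma rep_apply (p n q : ℕ) (a : Fin n → ZMod p) (i : Fin n) :
    rep p n q i (∑ v, a v • FreeAlgebra.ι (ZMod p) v)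
      = subdiag q (fun t => ∑ v, a v * Lform p n q i t v) := by
  rw [map_sum]
  simp only [map_smul, rep, FreeAlgebra.lift_ι_apply]
  ext x y
  simp only [Matrix.sum_apply, Matrix.smul_apply, subdiag, smul_eq_mul, mul_ite, mul_zero]
  by_cases h : (x : ℕ) = (y : ℕ) + 1 <;> simp [h]

lemma dot_single {p n : ℕ} (a : Fin n → ZMod p) (i : Fin n) :
    ∑ v, a v * (Pi.single i 1 : Fin n → ZMod p) v = a i := by
  simp [Pi.single_apply, mul_ite, Finset.sum_ite_eq']

lemma dot_pair {p n : ℕ} (a : Fin n → ZMod p) (i : Fin n) (j : ℕ) (hj : j < n)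
    (lam : ZMod p) :
    ∑ v, a v * ((if (v : ℕ) = j then 1 else 0) - lam * (if v = i then 1 else 0))
      = a ⟨j, hj⟩ - lam * a i := by
  simp only [mul_sub, Finset.sum_sub_distrib]
  congr 1
  · simp_rw [mul_ite, mul_one, mul_zero,
      show ∀ v : Fin n, ((v : ℕ) = j) = (v = ⟨j, hj⟩) from
        fun v => by simp [Fin.ext_iff]]
    simp [Finset.sum_ite_eq']
  · simp only [mul_ite, mul_one, mul_zero, mul_comm]
    simp [Finset.sum_ite_eq', mul_comm]

/-- **Proposition 2.8** (Malestein–Putman).  Let `p` be a prime, `n ≥ 1`, and `k ≥ 1` with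
`p^k > (p-1)(n-1)`.  Then there is an `𝔽_p`-linear map `Φ` from the free associative
`𝔽_p`-algebra on `x_1, …, x_n` to `𝔽_p` such that
`Φ((a_1 x_1 + ⋯ + a_n x_n)^(p^k)) ≠ 0` for every nonzero `(a_1, …, a_n) ∈ 𝔽_p^n`. -/
theorem exists_linear_functional_nonzero_on_pk_powers
    (p n k : ℕ) (hp : p.Prime) (hn : 1 ≤ n) (hk : 1 ≤ k)
    (hbig : p ^ k > (p - 1) * (n - 1)) :
    ∃ Φ : FreeAlgebra (ZMod p) (Fin n) →ₗ[ZMod p] ZMod p,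
      ∀ a : Fin n → ZMod p, a ≠ 0 →
        Φ ((∑ i, a i • FreeAlgebra.ι (ZMod p) i) ^ (p ^ k)) ≠ 0 := by
  haveI : Fact p.Prime := ⟨hp⟩
  haveI : NeZero p := ⟨hp.pos.ne'⟩
  set q := p ^ k with hqdef
  have hq : (p-1)*(n-1) < q := hbig
  have hp1 : 0 < p - 1 := by have := hp.two_le; omega
  have hq1 : 1 ≤ q := by omega
  have hpos : ∀ i : Fin n, 0 < q - (p-1)*(i : ℕ) := by
    intro i
    have h1 : (i : ℕ) ≤ n - 1 := by have := i.isLt; omega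
    have h2 : (p-1)*(i : ℕ) ≤ (p-1)*(n-1) := Nat.mul_le_mul_left _ h1
    omega
  refine ⟨∑ i : Fin n, (entryL p q).comp (rep p n q i).toLinearMap, ?_⟩
  intro a ha
  have hval : (∑ i : Fin n, (entryL p q).comp (rep p n q i).toLinearMap)
      ((∑ v, a v • FreeAlgebra.ι (ZMod p) v) ^ q)
      = ∑ i : Fin n, ∏ t ∈ Finset.range q, (∑ v, a v * Lform p n q i t v) := by
    rw [LinearMap.sum_apply]
    refine Finset.sum_congr rfl (fun i _ => ?_)
    rw [LinearMap.comp_apply, AlgHom.toLinearMap_apply, map_pow, rep_apply]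
    show (subdiag q _ ^ q) (Fin.last q) 0 = _
    rw [subdiag_pow]
    simp
  rw [hval]
  obtain ⟨w, hw⟩ : ∃ v, a v ≠ 0 := Function.ne_iff.mp ha
  have hSne : (Finset.univ.filter (fun v => a v ≠ 0)).Nonempty :=
    ⟨w, Finset.mem_filter.mpr ⟨Finset.mem_univ _, hw⟩⟩
  set i0 := (Finset.univ.filter (fun v => a v ≠ 0)).min' hSne with hi0def
  have hi0 : a i0 ≠ 0 := (Finset.mem_filter.mp (Finset.min'_mem _ hSne)).2
  have hmin : ∀ j : Fin n, j < i0 → a j = 0 := by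
    intro j hj
    by_contra hja
    exact absurd (Finset.min'_le _ j (Finset.mem_filter.mpr ⟨Finset.mem_univ _, hja⟩))
      (not_le.mpr hj)
  rw [Finset.sum_eq_single_of_mem i0 (Finset.mem_univ _)]
  · -- the term at i0 is nonzero
    refine Finset.prod_ne_zero_iff.mpr (fun t ht => ?_)
    rw [Finset.mem_range] at ht
    by_cases h : t < q - (p-1)*(i0 : ℕ)
    · rw [show Lform p n q i0 t = Pi.single i0 1 from if_pos h, dot_single]
      exact hi0
    · have hc : (p-1)*(i0 : ℕ) ≤ q := by have := hpos i0; omega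
      set s := t - (q - (p-1)*(i0 : ℕ)) with hsdef
      have hs : s < (p-1)*(i0 : ℕ) := by omega
      have hj : s / (p-1) < (i0 : ℕ) := Nat.div_lt_of_lt_mul hs
      have hjn : s / (p-1) < n := lt_trans hj i0.isLt
      rw [show Lform p n q i0 t = fun v : Fin n =>
          (if (v : ℕ) = s / (p-1) then 1 else 0)
          - ((s % (p-1) + 1 : ℕ) : ZMod p) * (if v = i0 then 1 else 0) from if_neg h,
        dot_pair a i0 (s/(p-1)) hjn]
      rw [hmin ⟨s/(p-1), hjn⟩ (by simpa [Fin.lt_def] using hj), zero_sub, neg_ne_zero]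
      refine mul_ne_zero ?_ hi0
      have hmod : s % (p-1) < p - 1 := Nat.mod_lt _ hp1
      intro hcast
      rw [ZMod.natCast_eq_zero_iff] at hcast
      have := Nat.le_of_dvd (by omega) hcast
      omega
  · -- every other term vanishes
    intro i _ hne
    by_cases hai : a i = 0
    · refine Finset.prod_eq_zero (Finset.mem_range.mpr hq1) ?_
      rw [show Lform p n q i 0 = Pi.single i 1 from if_pos (hpos i), dot_single]
      exact hai
    · have hlt : i0 < i := lt_of_le_of_ne
        (Finset.min'_le _ i (Finset.mem_filter.mpr ⟨Finset.mem_univ _, hai⟩)) (Ne.symm hne)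
      set lam := a i0 * (a i)⁻¹ with hlam
      have hlamne : lam ≠ 0 := mul_ne_zero hi0 (inv_ne_zero hai)
      have hvne : lam.val ≠ 0 := fun h0 => hlamne ((ZMod.val_eq_zero _).mp h0)
      set r := lam.val - 1 with hrdef
      have hrval : r + 1 = lam.val := by omega
      have hrlt : r + 1 ≤ p - 1 := by have := lam.val_lt; omega
      have hmul : ((i0 : ℕ) + 1) * (p-1) ≤ (i : ℕ) * (p-1) :=
        Nat.mul_le_mul_right _ hlt
      have hiq : (p-1)*(i : ℕ) ≤ q := by have := hpos i; omega
      set t := (q - (p-1)*(i : ℕ)) + ((i0 : ℕ)*(p-1) + r) with htdef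
      have hbnd : (i0 : ℕ)*(p-1) + r + 1 ≤ (p-1)*(i : ℕ) := by
        have e1 : (i0 : ℕ)*(p-1) + (p-1) = ((i0 : ℕ)+1)*(p-1) := by ring
        have e2 : (i : ℕ)*(p-1) = (p-1)*(i : ℕ) := Nat.mul_comm _ _
        omega
      have htq : t < q := by omega
      refine Finset.prod_eq_zero (Finset.mem_range.mpr htq) ?_
      have hnlt : ¬ t < q - (p-1)*(i : ℕ) := by omega
      have hseq : t - (q - (p-1)*(i : ℕ)) = (p-1)*(i0 : ℕ) + r := by
        have : (i0 : ℕ)*(p-1) = (p-1)*(i0 : ℕ) := Nat.mul_comm _ _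
        omega
      have hdiv : (t - (q - (p-1)*(i : ℕ))) / (p-1) = (i0 : ℕ) := by
        rw [hseq, Nat.mul_add_div hp1, Nat.div_eq_of_lt (by omega), Nat.add_zero]
      have hmod : (t - (q - (p-1)*(i : ℕ))) % (p-1) = r := by
        rw [hseq, Nat.mul_add_mod, Nat.mod_eq_of_lt (by omega)]
      rw [show Lform p n q i t = fun v : Fin n =>
          (if (v : ℕ) = (t - (q - (p-1)*(i : ℕ))) / (p-1) then 1 else 0)
          - (((t - (q - (p-1)*(i : ℕ))) % (p-1) + 1 : ℕ) : ZMod p) * (if v = i then 1 else 0)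
          from if_neg hnlt]
      rw [hdiv, hmod]
      rw [dot_pair a i (i0 : ℕ) i0.isLt]
      have hfin : (⟨(i0 : ℕ), i0.isLt⟩ : Fin n) = i0 := rfl
      rw [hfin, hrval]
      have hcast : ((lam.val : ℕ) : ZMod p) = lam := ZMod.natCast_zmod_val lam
      rw [hcast, hlam, mul_assoc, inv_mul_cancel₀ hai, mul_one, sub_self]
end

section
/- Let p be a prime, let n ≥ 1, let k ≥ 1, and let g ∈ 𝔽_p[t_1, …, t_n] be a homogeneous polynomial of total degree p^k (every monomial in the support of g has total degree p^k). Let A = FreeAlgebra 𝔽_p (Fin n) be the free associative 𝔽_p-algebra on generators x_1, …, x_n. Then there exists an 𝔽_p-linear map Φ : A → 𝔽_p such that for every tuple (a_1, …, a_n) ∈ 𝔽_p^n, Φ((a_1 x_1 + ⋯ + a_n x_n)^{p^k}) = g(a_1, …, a_n). -/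
section expansion
variable {R A : Type*} [CommSemiring R] [Semiring A] [Algebra R A]

/-- Noncommutative multinomial expansion of a power of a linear combination. -/
lemma sum_smul_pow_expand {n : ℕ} (a : Fin n → R) (y : Fin n → A) (m : ℕ) :
    (∑ i, a i • y i) ^ m
      = ∑ w : Fin m → Fin n, (∏ j, a (w j)) • (List.ofFn fun j => y (w j)).prod := by
  induction m with
  | zero => simp
  | succ m ih =>
    calc (∑ i, a i • y i) ^ (m+1)
        = (∑ i, a i • y i) * (∑ i, a i • y i) ^ m := by rw [pow_succ']
      _ = ∑ q : Fin n × (Fin m → Fin n),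
            (a q.1 * ∏ j, a (q.2 j)) • (y q.1 * (List.ofFn fun j => y (q.2 j)).prod) := by
          rw [ih, Finset.sum_mul_sum, Fintype.sum_prod_type]
          exact Finset.sum_congr rfl fun i _ => Finset.sum_congr rfl fun w _ =>
            smul_mul_smul_comm _ _ _ _
      _ = ∑ w : Fin (m+1) → Fin n, (∏ j, a (w j)) • (List.ofFn fun j => y (w j)).prod := by
          apply Fintype.sum_equiv (Fin.consEquiv fun _ : Fin (m+1) => Fin n)
          rintro ⟨i, w⟩
          simp only [Fin.consEquiv_apply]
          rw [Fin.prod_univ_succ, List.ofFn_succ, List.prod_cons]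
          simp only [Fin.cons_zero, Fin.cons_succ]
end expansion

lemma my_count_flatMap {α β : Type*} [DecidableEq β] (l : List α) (f : α → List β) (x : β) :
    ((l.flatMap f).count x) = (l.map fun i => (f i).count x).sum := by
  induction l with
  | nil => simp
  | cons i l ih => simp [List.count_append, ih]

/-- The exponent multiset (as a `Finsupp`) of a word. -/
noncomputable def cntAux {n : ℕ} (l : List (Fin n)) : Fin n →₀ ℕ :=
  Finsupp.equivFunOnFinite.symm fun i => l.count i

lemma cntAux_apply {n : ℕ} (l : List (Fin n)) (i : Fin n) : cntAux l i = l.count i := rfl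

/-- The canonical (sorted) word with a given exponent Finsupp. -/
def LAux {n : ℕ} (d : Fin n →₀ ℕ) : List (Fin n) :=
  (List.finRange n).flatMap fun i => List.replicate (d i) i

lemma cnt_LAux {n : ℕ} (d : Fin n →₀ ℕ) : cntAux (LAux d) = d := by
  ext i
  rw [cntAux_apply, LAux, my_count_flatMap]
  have : ∀ j : Fin n, (List.replicate (d j) j).count i = if j = i then d j else 0 := by
    intro j; rw [List.count_replicate]; simp
  simp only [this]
  rw [← List.ofFn_eq_map, List.sum_ofFn]
  simp

lemma length_LAux {n : ℕ} (d : Fin n →₀ ℕ) : (LAux d).length = ∑ i, d i := by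
  rw [LAux, List.length_flatMap, ← List.ofFn_eq_map, List.sum_ofFn]
  simp

lemma map_prod_LAux {n : ℕ} {R : Type*} [CommMonoid R] (d : Fin n →₀ ℕ) (a : Fin n → R) :
    ((LAux d).map a).prod = ∏ i, a i ^ d i := by
  rw [LAux, List.map_flatMap]
  simp only [List.map_replicate]
  rw [show ((List.finRange n).flatMap fun i => List.replicate (d i) (a i))
        = ((List.finRange n).map fun i => List.replicate (d i) (a i)).flatten from rfl,
    List.prod_flatten, List.map_map]
  simp only [Function.comp_def, List.prod_replicate]
  rw [← List.ofFn_eq_map, List.prod_ofFn]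

lemma E_word (p n : ℕ) (w : List (Fin n)) :
    (FreeAlgebra.equivMonoidAlgebraFreeMonoid (R := ZMod p) (X := Fin n))
        ((w.map (FreeAlgebra.ι (ZMod p))).prod)
      = MonoidAlgebra.single (FreeMonoid.ofList w) 1 := by
  induction w with
  | nil => simp [MonoidAlgebra.one_def]
  | cons i w ih =>
    rw [List.map_cons, List.prod_cons, map_mul, ih]
    have : (FreeAlgebra.equivMonoidAlgebraFreeMonoid (R := ZMod p) (X := Fin n))
        (FreeAlgebra.ι (ZMod p) i) = MonoidAlgebra.single (FreeMonoid.of i) 1 := by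
      rw [FreeAlgebra.equivMonoidAlgebraFreeMonoid]; simp [MonoidAlgebra.of_apply]
    rw [this, MonoidAlgebra.single_mul_single, one_mul]
    rfl

lemma ofFn_getD_of_length {α : Type*} (l : List α) (x : α) (m : ℕ) (h : l.length = m) :
    List.ofFn (fun j : Fin m => l.getD (j : ℕ) x) = l := by
  subst h
  conv_rhs => rw [← List.ofFn_getElem (xs := l)]
  congr 1; funext j
  rw [List.getD_eq_getElem l x j.isLt]

/-- (Malestein–Putman, first claim in the proof of Proposition 2.8.)  Let `p` be a prime,
`n ≥ 1`, `k ≥ 1`, and let `g ∈ 𝔽_p[t_1, …, t_n]` be homogeneous of degree `p^k`.  Then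
there is an `𝔽_p`-linear map `Φ` from the free associative `𝔽_p`-algebra on `x_1, …, x_n`
to `𝔽_p` such that `Φ((a_1 x_1 + ⋯ + a_n x_n)^(p^k)) = g(a_1, …, a_n)` for all
`(a_1, …, a_n) ∈ 𝔽_p^n`. -/
theorem exists_linear_functional_realizing_homogeneous_polynomial
    (p n k : ℕ) (hp : p.Prime) (hn : 1 ≤ n) (hk : 1 ≤ k)
    (g : MvPolynomial (Fin n) (ZMod p)) (hg : g.IsHomogeneous (p ^ k)) :
    ∃ Φ : FreeAlgebra (ZMod p) (Fin n) →ₗ[ZMod p] ZMod p,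
      ∀ a : Fin n → ZMod p,
        Φ ((∑ i, a i • FreeAlgebra.ι (ZMod p) i) ^ (p ^ k)) = MvPolynomial.eval a g := by
  classical
  set m := p ^ k with hm
  set c : List (Fin n) → ZMod p := fun l =>
    if LAux (cntAux l) = l then MvPolynomial.coeff (cntAux l) g else 0 with hc
  refine ⟨(Finsupp.linearCombination (ZMod p) c).comp
    ((MonoidAlgebra.coeffLinearEquiv (M := FreeMonoid (Fin n)) (ZMod p)).toLinearMap.comp
    (FreeAlgebra.equivMonoidAlgebraFreeMonoid (R := ZMod p) (X := Fin n)).toLinearMap), ?_⟩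
  intro a
  -- degree of every support element is m
  have hdeg : ∀ d ∈ g.support, ∑ i, d i = m := by
    intro d hd
    have h1 : (Finsupp.weight (1 : Fin n → ℕ)) d = m :=
      hg (MvPolynomial.mem_support_iff.mp hd)
    change (Finsupp.weight fun _ => (1 : ℕ)) d = m at h1
    rw [← Finsupp.degree_eq_weight_one (R := ℕ)] at h1
    rw [← h1, Finsupp.degree]
    exact (Finset.sum_subset (Finset.subset_univ _) (by
      intro i _ hi
      exact Finsupp.notMem_support_iff.mp hi)).symm
  have hlen : ∀ d ∈ g.support, (LAux d).length = m := by
    intro d hd; rw [length_LAux]; exact hdeg d hd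
  -- the canonical word as a function `Fin m → Fin n`
  set ψ : (Fin n →₀ ℕ) → (Fin m → Fin n) :=
    fun d j => (LAux d).getD (j : ℕ) ⟨0, hn⟩ with hψ
  have hofn : ∀ d ∈ g.support, List.ofFn (ψ d) = LAux d := by
    intro d hd
    exact ofFn_getD_of_length _ _ _ (hlen d hd)
  -- compute Φ of the power
  rw [sum_smul_pow_expand, map_sum]
  have hterm : ∀ w : Fin m → Fin n,
      ((Finsupp.linearCombination (ZMod p) c).comp
        ((MonoidAlgebra.coeffLinearEquiv (M := FreeMonoid (Fin n)) (ZMod p)).toLinearMap.comp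
        (FreeAlgebra.equivMonoidAlgebraFreeMonoid (R := ZMod p) (X := Fin n)).toLinearMap))
        ((∏ j, a (w j)) • (List.ofFn fun j => FreeAlgebra.ι (ZMod p) (w j)).prod)
      = (∏ j, a (w j)) * c (List.ofFn w) := by
    intro w
    rw [map_smul, smul_eq_mul]
    congr 1
    show Finsupp.linearCombination (ZMod p) c
      ((MonoidAlgebra.coeffLinearEquiv (M := FreeMonoid (Fin n)) (ZMod p)).toLinearMap
        ((FreeAlgebra.equivMonoidAlgebraFreeMonoid (R := ZMod p) (X := Fin n)).toLinearMap
          (List.ofFn fun j => FreeAlgebra.ι (ZMod p) (w j)).prod)) = _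
    have : (List.ofFn fun j => FreeAlgebra.ι (ZMod p) (w j))
        = (List.ofFn w).map (FreeAlgebra.ι (ZMod p)) := by
      rw [List.map_ofFn]; rfl
    rw [this]
    have h0 : (FreeAlgebra.equivMonoidAlgebraFreeMonoid (R := ZMod p) (X := Fin n)).toLinearMap
        ((List.map (FreeAlgebra.ι (ZMod p)) (List.ofFn w)).prod)
        = MonoidAlgebra.single (FreeMonoid.ofList (List.ofFn w)) 1 := E_word p n (List.ofFn w)
    erw [h0]
    have : (MonoidAlgebra.coeffLinearEquiv (ZMod p)).toLinearMap
        (MonoidAlgebra.single (FreeMonoid.ofList (List.ofFn w)) (1 : ZMod p))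
        = Finsupp.single (List.ofFn w) (1 : ZMod p) := rfl
    rw [this, Finsupp.linearCombination_single, one_smul]
  simp only [hterm]
  -- now a purely combinatorial identity
  rw [MvPolynomial.eval_eq']
  have himg : ∀ w : Fin m → Fin n, w ∉ g.support.image ψ →
      (∏ j, a (w j)) * c (List.ofFn w) = 0 := by
    intro w hw
    by_contra hne
    have hcne : c (List.ofFn w) ≠ 0 := fun h => hne (by rw [h, mul_zero])
    rw [hc] at hcne
    simp only at hcne
    by_cases hcan : LAux (cntAux (List.ofFn w)) = List.ofFn w
    · rw [if_pos hcan] at hcne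
      set d := cntAux (List.ofFn w) with hd
      have hds : d ∈ g.support := MvPolynomial.mem_support_iff.mpr hcne
      have hψd : ψ d = w := by
        have h1 : List.ofFn (ψ d) = LAux d := hofn d hds
        have h2 : List.ofFn (ψ d) = List.ofFn w := by rw [h1, hcan]
        rwa [List.ofFn_inj] at h2
      exact hw (Finset.mem_image.mpr ⟨d, hds, hψd⟩)
    · rw [if_neg hcan] at hcne
      exact hcne rfl
  rw [← Finset.sum_subset (Finset.subset_univ (g.support.image ψ)) (fun w _ hw => himg w hw)]
  have hinj : Set.InjOn ψ g.support := by
    intro d hd d' hd' h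
    have h1 : LAux d = LAux d' := by
      rw [← hofn d hd, ← hofn d' hd', h]
    have := congrArg cntAux h1
    rwa [cnt_LAux, cnt_LAux] at this
  rw [Finset.sum_image (fun d hd d' hd' h => hinj hd hd' h)]
  refine Finset.sum_congr rfl fun d hd => ?_
  have h1 : List.ofFn (ψ d) = LAux d := hofn d hd
  have h2 : (∏ j, a (ψ d j)) = ∏ i, a i ^ d i := by
    rw [← List.prod_ofFn, show (List.ofFn fun j => a (ψ d j)) = (List.ofFn (ψ d)).map a by
      rw [List.map_ofFn]; rfl, h1, map_prod_LAux]
  have h3 : c (List.ofFn (ψ d)) = MvPolynomial.coeff d g := by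
    rw [h1, hc]
    simp [cnt_LAux]
  rw [h2, h3, mul_comm]
end

section
/- Let p be a prime, let n ≥ 1, and let k ≥ 1 be an integer such that p^k > (p-1)(n-1). Let e : Fin n → ℕ be a tuple of exponents, not all zero, such that e_1 + ⋯ + e_n ≡ 1 (mod p-1). Then there exists a tuple e' : Fin n → ℕ such that: (1) e'_1 + ⋯ + e'_n = p^k; (2) e'_i ≡ e_i (mod p-1) for all i; and (3) e'_i = 0 if and only if e_i = 0, for all i. Consequently, for every tuple (a_1, …, a_n) ∈ 𝔽_p^n one has a_1^{e_1} ⋯ a_n^{e_n} = a_1^{e'_1} ⋯ a_n^{e'_n}. -/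
lemma aux_pow_eq_pow_of_modEq (p : ℕ) (hp : p.Prime) (a : ZMod p) (ha : a ≠ 0)
    (m m' : ℕ) (h : m ≡ m' [MOD p - 1]) : a ^ m = a ^ m' := by
  haveI := Fact.mk hp
  have h1 : a ^ (p - 1) = 1 := ZMod.pow_card_sub_one_eq_one ha
  have key : ∀ t : ℕ, a ^ t = a ^ (t % (p - 1)) := by
    intro t
    conv_lhs => rw [← Nat.mod_add_div t (p - 1)]
    rw [pow_add, pow_mul, h1, one_pow, mul_one]
  rw [key m, key m', show m % (p-1) = m' % (p-1) from h]

/-- (Malestein–Putman, second claim in the proof of Proposition 2.8.)  Let `p` be a prime,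
`n ≥ 1`, `k ≥ 1` with `p^k > (p-1)(n-1)`.  If `e : Fin n → ℕ` is not identically zero and
`e_1 + ⋯ + e_n ≡ 1 (mod p-1)`, then there is `e' : Fin n → ℕ` with `e'_1 + ⋯ + e'_n = p^k`,
`e'_i ≡ e_i (mod p-1)` and `e'_i = 0 ↔ e_i = 0` for all `i`; consequently the monomials
`t^e` and `t^e'` take the same values on `𝔽_p^n`. -/
theorem exists_monomial_exponents_of_degree_pk
    (p n k : ℕ) (hp : p.Prime) (hn : 1 ≤ n) (hk : 1 ≤ k)
    (hbig : p ^ k > (p - 1) * (n - 1))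
    (e : Fin n → ℕ) (he : e ≠ 0)
    (hsum : (∑ i, e i) ≡ 1 [MOD p - 1]) :
    ∃ e' : Fin n → ℕ,
      (∑ i, e' i) = p ^ k ∧
      (∀ i, e' i ≡ e i [MOD p - 1]) ∧
      (∀ i, e' i = 0 ↔ e i = 0) ∧
      ∀ a : Fin n → ZMod p, (∏ i, a i ^ e i) = ∏ i, a i ^ e' i := by
  classical
  set q := p - 1 with hqdef
  have hq1 : 1 ≤ q := by
    have := hp.two_le; omega
  -- reduced exponents
  set r : Fin n → ℕ := fun i => if e i = 0 then 0 else if e i % q = 0 then q else e i % q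
    with hrdef
  have hr_mod : ∀ i, r i ≡ e i [MOD q] := by
    intro i
    simp only [hrdef]
    split_ifs with h1 h2
    · simp [h1, Nat.ModEq.refl]
    · unfold Nat.ModEq
      simp [Nat.mod_self, h2]
    · exact (Nat.mod_modEq (e i) q)
  have hr_zero : ∀ i, r i = 0 ↔ e i = 0 := by
    intro i
    simp only [hrdef]
    split_ifs with h1 h2 <;> simp_all <;> omega
  have hr_le : ∀ i, r i ≤ q := by
    intro i
    simp only [hrdef]
    split_ifs with h1 h2
    · omega
    · exact le_rfl
    · exact (Nat.mod_lt _ (by omega)).le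
  set S := ∑ i, r i with hSdef
  have hS_mod : S ≡ 1 [MOD q] := by
    have h2 : ∀ s : Finset (Fin n), (∑ i ∈ s, r i) ≡ ∑ i ∈ s, e i [MOD q] := by
      intro s
      induction s using Finset.induction with
      | empty => rfl
      | insert a s h ih =>
        rw [Finset.sum_insert h, Finset.sum_insert h]
        exact (hr_mod _).add ih
    exact (h2 Finset.univ).trans hsum
  have hS_le_qn : S ≤ q * n := by
    calc S ≤ ∑ _i : Fin n, q := Finset.sum_le_sum fun i _ => hr_le i
    _ = q * n := by simp [Finset.sum_const, mul_comm]
  have hS_le : S ≤ p ^ k := by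
    rcases eq_or_lt_of_le hq1 with hq | hq
    · -- q = 1
      rw [← hq] at hbig hS_le_qn
      omega
    · -- q ≥ 2
      have hrem : S % q = 1 := by
        have h := hS_mod
        unfold Nat.ModEq at h
        rwa [Nat.mod_eq_of_lt hq] at h
      have hmad := Nat.mod_add_div S q
      have hdiv : S / q ≤ n - 1 := by
        by_contra hcon
        push_neg at hcon
        have h1 : n ≤ S / q := by omega
        have h2 : q * n ≤ q * (S / q) := Nat.mul_le_mul_left q h1
        omega
      have h3 : q * (S / q) ≤ q * (n - 1) := Nat.mul_le_mul_left q hdiv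
      omega
  -- divisibility of the deficit
  have hpk_mod : p ^ k ≡ 1 [MOD q] := by
    have h1 : p ≡ 1 [MOD q] := by
      unfold Nat.ModEq
      have h2 : p = q + 1 := by have := hp.two_le; omega
      rw [h2]; simp [Nat.add_mod]
    simpa using h1.pow k
  have hdvd : q ∣ p ^ k - S := by
    have h1 : S ≡ p ^ k [MOD q] := hS_mod.trans hpk_mod.symm
    exact (Nat.modEq_iff_dvd' hS_le).mp h1
  set D := p ^ k - S with hDdef
  -- pick a nonzero index
  obtain ⟨i0, hi0⟩ : ∃ i, e i ≠ 0 := by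
    by_contra hcon
    push_neg at hcon
    exact he (funext fun i => hcon i)
  have hD0 : ∀ i : Fin n, (if i = i0 then D else 0) ≡ 0 [MOD q] := by
    intro i
    split_ifs
    · exact (Nat.modEq_zero_iff_dvd).mpr hdvd
    · rfl
  have hmod : ∀ i, (r i + if i = i0 then D else 0) ≡ e i [MOD q] := by
    intro i
    calc (r i + if i = i0 then D else 0) ≡ r i + 0 [MOD q] :=
          (Nat.ModEq.refl (r i)).add (hD0 i)
      _ = r i := add_zero _
      _ ≡ e i [MOD q] := hr_mod i
  have hzero : ∀ i, (r i + if i = i0 then D else 0) = 0 ↔ e i = 0 := by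
    intro i
    constructor
    · intro h
      exact (hr_zero i).mp (by omega)
    · intro h
      have hri : r i = 0 := (hr_zero i).mpr h
      have hine : i ≠ i0 := fun hi => hi0 (hi ▸ h)
      simp [hri, hine]
  refine ⟨fun i => r i + if i = i0 then D else 0, ?_, hmod, hzero, ?_⟩
  · rw [Finset.sum_add_distrib]
    simp only [Finset.sum_ite_eq', Finset.mem_univ, if_true]
    exact Nat.add_sub_cancel' hS_le
  · intro a
    apply Finset.prod_congr rfl
    intro i _
    dsimp only
    by_cases ha : a i = 0
    · by_cases hei : e i = 0
      · rw [hei, (hzero i).mpr hei]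
      · have hm'0 : (r i + if i = i0 then D else 0) ≠ 0 := fun h => hei ((hzero i).mp h)
        rw [ha, zero_pow hei, zero_pow hm'0]
    · exact aux_pow_eq_pow_of_modEq p hp (a i) ha _ _ (hmod i).symm
end

section
/- Let p be a prime and let n ≥ 1. Then there exists a multivariate polynomial f ∈ 𝔽_p[t_1, …, t_n] such that: (1) every monomial in the support of f has total degree congruent to 1 modulo p-1; and (2) f(a_1, …, a_n) ≠ 0 for every nonzero tuple (a_1, …, a_n) ∈ 𝔽_p^n. -/
open MvPolynomial Finset

/-- (Malestein–Putman, third claim in the proof of Proposition 2.8.)  For every prime `p`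
and `n ≥ 1` there is a polynomial `f ∈ 𝔽_p[t_1, …, t_n]` all of whose monomials have total
degree congruent to `1` modulo `p-1` and which is nonvanishing on `𝔽_p^n ∖ {0}`. -/
theorem exists_polynomial_nonvanishing_degrees_one_mod
    (p n : ℕ) (hp : p.Prime) (hn : 1 ≤ n) :
    ∃ f : MvPolynomial (Fin n) (ZMod p),
      (∀ d ∈ f.support, (d.sum fun _ m => m) ≡ 1 [MOD p - 1]) ∧
      ∀ a : Fin n → ZMod p, a ≠ 0 → MvPolynomial.eval a f ≠ 0 := by
  haveI : Fact p.Prime := ⟨hp⟩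
  set m := p - 1 with hm
  have hm1 : 1 ≤ m := Nat.le_sub_one_of_lt hp.one_lt
  set D : (Fin n →₀ ℕ) → ℕ := fun d => d.sum fun _ k => k with hD
  have Dadd : ∀ d e : Fin n →₀ ℕ, D (d + e) = D d + D e := by
    intro d e; simp [hD, Finsupp.sum_add_index']
  have hmul : ∀ (a b : ℕ) (f g : MvPolynomial (Fin n) (ZMod p)),
      (∀ d ∈ f.support, D d ≡ a [MOD m]) → (∀ d ∈ g.support, D d ≡ b [MOD m]) →
      ∀ d ∈ (f * g).support, D d ≡ a + b [MOD m] := by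
    intro a b f g hf hg d hd
    have h := MvPolynomial.support_mul f g hd
    rw [Finset.mem_add] at h
    obtain ⟨d1, h1, d2, h2, rfl⟩ := h
    rw [Dadd]
    exact Nat.ModEq.add (hf d1 h1) (hg d2 h2)
  have hfac : ∀ j : Fin n, ∀ d ∈ (1 - X j ^ m : MvPolynomial (Fin n) (ZMod p)).support,
      D d ≡ 0 [MOD m] := by
    intro j d hd
    rw [sub_eq_add_neg] at hd
    have h := MvPolynomial.support_add hd
    rw [Finset.mem_union] at h
    rcases h with h | h
    · have : d = 0 := by
        rw [MvPolynomial.mem_support_iff] at h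
        by_contra hne
        simp [MvPolynomial.coeff_one, hne] at h
        exact hne h.symm
      simp [this, hD, Nat.ModEq]
    · rw [MvPolynomial.support_neg, MvPolynomial.support_X_pow] at h
      simp only [Finset.mem_singleton] at h
      subst h
      simp [hD, Finsupp.sum_single_index, Nat.ModEq]
  have hprod : ∀ (s : Finset (Fin n)),
      ∀ d ∈ (∏ j ∈ s, (1 - X j ^ m) : MvPolynomial (Fin n) (ZMod p)).support,
      D d ≡ 0 [MOD m] := by
    intro s
    induction s using Finset.induction_on with
    | empty =>
      intro d hd
      simp only [Finset.prod_empty] at hd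
      have : d = 0 := by
        rw [MvPolynomial.mem_support_iff] at hd
        by_contra hne
        simp [MvPolynomial.coeff_one, hne] at hd
        exact hne hd.symm
      simp [this, hD, Nat.ModEq]
    | @insert x s' hx ih =>
      rw [Finset.prod_insert hx]
      exact hmul 0 0 _ _ (hfac x) ih
  refine ⟨∑ i : Fin n, X i * ∏ j ∈ Finset.univ.filter (fun j => j < i), (1 - X j ^ m), ?_, ?_⟩
  · intro d hd
    have h := MvPolynomial.support_sum hd
    rw [Finset.mem_biUnion] at h
    obtain ⟨i, -, hi⟩ := h
    have hXi : ∀ d ∈ (X i : MvPolynomial (Fin n) (ZMod p)).support, D d ≡ 1 [MOD m] := by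
      intro d hd
      rw [MvPolynomial.support_X] at hd
      simp only [Finset.mem_singleton] at hd
      subst hd
      simp only [hD, Finsupp.sum_single_index]
      rfl
    exact hmul 1 0 _ _ hXi (hprod _) d hi
  · intro a ha
    have hex : ∃ i, a i ≠ 0 := by
      by_contra h
      push_neg at h
      exact ha (funext h)
    set S := Finset.univ.filter (fun i => a i ≠ 0) with hS
    have hSne : S.Nonempty := by
      obtain ⟨i, hi⟩ := hex
      exact ⟨i, by simp [hS, hi]⟩
    set i0 := S.min' hSne with hi0
    have hi0mem : a i0 ≠ 0 := by
      have := S.min'_mem hSne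
      simp only [hS, Finset.mem_filter] at this
      exact this.2
    have hlt : ∀ j, j < i0 → a j = 0 := by
      intro j hj
      by_contra hja
      have : i0 ≤ j := S.min'_le j (by simp [hS, hja])
      exact absurd hj (not_lt.mpr this)
    have heval : MvPolynomial.eval a
        (∑ i : Fin n, X i * ∏ j ∈ Finset.univ.filter (fun j => j < i), (1 - X j ^ m)) =
        a i0 := by
      rw [map_sum]
      rw [Finset.sum_eq_single i0]
      · simp only [map_mul, map_prod, map_sub, map_pow, map_one, MvPolynomial.eval_X]
        have : ∏ j ∈ Finset.univ.filter (fun j => j < i0), (1 - a j ^ m) = 1 := by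
          apply Finset.prod_eq_one
          intro j hj
          simp only [Finset.mem_filter] at hj
          rw [hlt j hj.2, zero_pow (by omega), sub_zero]
        rw [this, mul_one]
      · intro i _ hne
        rcases lt_or_gt_of_ne (Ne.symm hne) with h | h
        · -- i0 < i : the product contains the zero factor at j = i0
          simp only [map_mul, map_prod, map_sub, map_pow, map_one, MvPolynomial.eval_X]
          have : ∏ j ∈ Finset.univ.filter (fun j => j < i), (1 - a j ^ m) = 0 := by
            apply Finset.prod_eq_zero (i := i0) (by simp [h])
            rw [hm, ZMod.pow_card_sub_one_eq_one hi0mem, sub_self]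
          rw [this, mul_zero]
        · -- i < i0 : a i = 0
          simp [map_mul, MvPolynomial.eval_X, hlt i h]
      · intro h
        exact absurd (Finset.mem_univ i0) h
    rw [heval]
    exact hi0mem
end

section
/- Let n ≥ 2, let G be a finite group, let π : F_n → G be a surjective homomorphism, and set R = ker(π). Let V be an irreducible ℚ-linear representation of G such that for every primitive x ∈ F_n and every nonzero v ∈ V, π(x)·v ≠ v. Let m ≥ 1 be an integer divisible by the order of π(x) in G for every primitive x ∈ F_n. Let (y_1, …, y_n) be a free basis of F_n and let τ be the transvection with τ(y_1) = y_2 y_1 and τ(y_i) = y_i for i ≠ 1. Then: (1) π ∘ τ^m = π, so τ^m restricts to an automorphism of R and induces a ℚ-linear automorphism T of H₁(R;ℚ) commuting with the G-action; and (2) for every G-submodule W of H₁(R;ℚ) that is isomorphic to V as a representation of G, T fixes W pointwise, i.e., T(w) = w for all w ∈ W. -/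
open scoped TensorProduct

/-- `b : Fin n → F_n` is a free basis of the free group `F_n` if the induced homomorphism
`F_n → F_n` is an isomorphism. -/
def IsFreeBasis {n : ℕ} (b : Fin n → FreeGroup (Fin n)) : Prop :=
  Function.Bijective (FreeGroup.lift b)

/-- An element of `F_n` is primitive if it belongs to some free basis of `F_n`. -/
def IsPrimitiveElt {n : ℕ} (x : FreeGroup (Fin n)) : Prop :=
  ∃ b : Fin n → FreeGroup (Fin n), IsFreeBasis b ∧ ∃ i : Fin n, b i = x

section aux
variable {k : Type} [CommRing k] {Γ : Type*} [Group Γ] {R : Subgroup Γ}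

theorem h1Class_mul (r s : R) : h1Class k (r * s) = h1Class k r + h1Class k s := by
  unfold h1Class
  rw [map_mul, ofMul_mul, TensorProduct.tmul_add]

theorem h1Class_one : h1Class k (1 : R) = 0 := by
  unfold h1Class
  rw [map_one, ofMul_one, TensorProduct.tmul_zero]

theorem h1Class_inv (r : R) : h1Class k r⁻¹ = - h1Class k r := by
  unfold h1Class
  rw [map_inv, ofMul_inv, TensorProduct.tmul_neg]

theorem h1Class_congr {r s : R} (h : (r : Γ) = s) : h1Class k r = h1Class k s := by
  congr 1; exact Subtype.ext h

theorem span_h1Class_top :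
    Submodule.span ℚ (Set.range (h1Class ℚ (R := R))) = ⊤ := by
  rw [eq_top_iff]
  rintro v -
  induction v using TensorProduct.induction_on with
  | zero => exact Submodule.zero_mem _
  | tmul q a =>
    obtain ⟨b, rfl⟩ : ∃ b : Abelianization R, Additive.ofMul b = a := ⟨Additive.toMul a, rfl⟩
    obtain ⟨r, rfl⟩ : ∃ r : R, Abelianization.of r = b :=
      QuotientGroup.induction_on b fun r => ⟨r, rfl⟩
    have : q ⊗ₜ[ℤ] Additive.ofMul (Abelianization.of r) = q • h1Class ℚ r := by
      unfold h1Class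
      rw [TensorProduct.smul_tmul', smul_eq_mul, mul_one]
    rw [this]
    exact Submodule.smul_mem _ _ (Submodule.subset_span ⟨r, rfl⟩)
  | add u v hu hv => exact Submodule.add_mem _ hu hv

end aux

set_option maxHeartbeats 2000000 in
/-- (Malestein–Putman, the second part of Proposition 4.2.)  Let `π : F_n → G` be a
surjection onto a finite group with kernel `R`, let `V` be an irreducible `ℚ`-representation
of `G` on which the image of every primitive element acts without nonzero fixed vectors,
let `m ≥ 1` be divisible by the orders of the images of all primitive elements, and let `τ`
be the transvection `y_1 ↦ y_2 y_1` for a free basis `y`.  Then `π ∘ τ^m = π`, so `τ^m`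
induces a `ℚ`-linear automorphism `T` of `H₁(R;ℚ)` (characterized by
`T [r] = [τ^m(r)]`); `T` commutes with the conjugation action of `G` on `H₁(R;ℚ)`
(characterized by `g·[r] = [x r x⁻¹]` for any lift `x` of `g`), and `T` fixes pointwise
every `G`-submodule `W` of `H₁(R;ℚ)` isomorphic to `V` as a representation of `G`. -/
theorem transvection_power_fixes_isotypic_component
    (n : ℕ) (hn : 2 ≤ n) (G : Type) [Group G] [Finite G]
    (π : FreeGroup (Fin n) →* G) (hπ : Function.Surjective π)
    (V : Type) [AddCommGroup V] [Module ℚ V] [Nontrivial V]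
    (ρV : Representation ℚ G V)
    (hirr : ∀ W : Submodule ℚ V, (∀ g : G, ∀ v ∈ W, ρV g v ∈ W) → W = ⊥ ∨ W = ⊤)
    (hfix : ∀ x : FreeGroup (Fin n), IsPrimitiveElt x → ∀ v : V, v ≠ 0 → ρV (π x) v ≠ v)
    (m : ℕ) (hm : 1 ≤ m)
    (hdvd : ∀ x : FreeGroup (Fin n), IsPrimitiveElt x → orderOf (π x) ∣ m)
    (y : Fin n → FreeGroup (Fin n)) (hy : IsFreeBasis y)
    (τ : MulAut (FreeGroup (Fin n)))
    (hτ₁ : τ (y ⟨0, by omega⟩) = y ⟨1, by omega⟩ * y ⟨0, by omega⟩)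
    (hτ₂ : ∀ i : Fin n, i ≠ ⟨0, by omega⟩ → τ (y i) = y i) :
    (∀ x : FreeGroup (Fin n), π ((τ ^ m) x) = π x) ∧
    ∃ T : (ℚ ⊗[ℤ] Additive (Abelianization π.ker)) ≃ₗ[ℚ]
        (ℚ ⊗[ℤ] Additive (Abelianization π.ker)),
      (∀ (r : π.ker) (h' : (τ ^ m) (r : FreeGroup (Fin n)) ∈ π.ker),
        T (h1Class ℚ r) = h1Class ℚ (⟨(τ ^ m) (r : FreeGroup (Fin n)), h'⟩ : π.ker)) ∧
      ∀ ρH : Representation ℚ G (ℚ ⊗[ℤ] Additive (Abelianization π.ker)),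
        (∀ (x : FreeGroup (Fin n)) (r : π.ker) (h' : x * ↑r * x⁻¹ ∈ π.ker),
          ρH (π x) (h1Class ℚ r) = h1Class ℚ (⟨x * ↑r * x⁻¹, h'⟩ : π.ker)) →
        (∀ (g : G) (v : ℚ ⊗[ℤ] Additive (Abelianization π.ker)),
          T (ρH g v) = ρH g (T v)) ∧
        ∀ W : Submodule ℚ (ℚ ⊗[ℤ] Additive (Abelianization π.ker)),
          (∀ g : G, ∀ v ∈ W, ρH g v ∈ W) →
          (∃ e : V ≃ₗ[ℚ] W, ∀ (g : G) (v : V),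
            ((e (ρV g v) : W) : ℚ ⊗[ℤ] Additive (Abelianization π.ker)) = ρH g ↑(e v)) →
          ∀ w ∈ W, T w = w := by
  classical
  have h0 : (0:ℕ) < n := by omega
  have h1 : (1:ℕ) < n := by omega
  set y0 := y ⟨0, h0⟩ with hy0def
  set z := y ⟨1, h1⟩ with hzdef
  have zprim : IsPrimitiveElt z := ⟨y, hy, ⟨1, h1⟩, rfl⟩
  have hgm : (π z) ^ m = 1 := orderOf_dvd_iff_pow_eq_one.mp (hdvd z zprim)
  have hτz : τ z = z := hτ₂ ⟨1, h1⟩ (by simp)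
  have hpowz : ∀ k : ℕ, (τ ^ k) z = z := by
    intro k
    induction k with
    | zero => rfl
    | succ k ih => rw [pow_succ, MulAut.mul_apply, hτz, ih]
  have hpowy0 : ∀ k : ℕ, (τ ^ k) y0 = z ^ k * y0 := by
    intro k
    induction k with
    | zero => simp
    | succ k ih =>
      rw [pow_succ', MulAut.mul_apply, ih, map_mul, map_pow, hτz, hτ₁, pow_succ']
      group
  have hpowyi : ∀ (k : ℕ) (i : Fin n), i ≠ ⟨0, h0⟩ → (τ ^ k) (y i) = y i := by
    intro k i hi
    induction k with
    | zero => rfl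
    | succ k ih => rw [pow_succ, MulAut.mul_apply, hτ₂ i hi, ih]
  have hgen : ∀ x : FreeGroup (Fin n), x ∈ Subgroup.closure (Set.range y) := by
    have h : (FreeGroup.lift y).range = Subgroup.closure (Set.range y) :=
      FreeGroup.range_lift_eq_closure
    rw [MonoidHom.range_eq_top.mpr hy.2] at h
    intro x; rw [← h]; trivial
  have hπσ : ∀ x : FreeGroup (Fin n), π ((τ ^ m) x) = π x := by
    intro x
    induction hgen x using Subgroup.closure_induction with
    | mem x hx =>
      obtain ⟨i, rfl⟩ := hx
      by_cases hi : i = ⟨0, h0⟩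
      · subst hi
        rw [hpowy0 m, map_mul, map_pow, hgm, one_mul]
      · rw [hpowyi m i hi]
    | one => rw [map_one, map_one]
    | mul a b ha hb iha ihb => rw [map_mul, map_mul, map_mul, iha, ihb]
    | inv a ha iha => rw [map_inv, map_inv, map_inv, iha]
  have hker : ∀ x : FreeGroup (Fin n), x ∈ π.ker ↔ (τ ^ m) x ∈ π.ker := by
    intro x; rw [MonoidHom.mem_ker, MonoidHom.mem_ker, hπσ x]
  set σ := τ ^ m with hσdef
  let eR : π.ker ≃* π.ker := MulEquiv.mk'
    ⟨fun r => ⟨σ ↑r, (hker ↑r).mp r.2⟩,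
     fun r => ⟨σ.symm ↑r, (hker _).mpr (by rw [MulEquiv.apply_symm_apply]; exact r.2)⟩,
     fun r => Subtype.ext (σ.symm_apply_apply ↑r),
     fun r => Subtype.ext (σ.apply_symm_apply ↑r)⟩
    (fun a b => Subtype.ext (map_mul σ ↑a ↑b))
  let T : (ℚ ⊗[ℤ] Additive (Abelianization π.ker)) ≃ₗ[ℚ]
      (ℚ ⊗[ℤ] Additive (Abelianization π.ker)) :=
    TensorProduct.AlgebraTensorModule.congr (LinearEquiv.refl ℚ ℚ)
      ((MulEquiv.toAdditive eR.abelianizationCongr).toIntLinearEquiv)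
  have hT : ∀ (r : π.ker) (h' : σ ↑r ∈ π.ker),
      T (h1Class ℚ r) = h1Class ℚ (⟨σ ↑r, h'⟩ : π.ker) := by
    intro r h'
    show TensorProduct.AlgebraTensorModule.congr _ _
      ((1:ℚ) ⊗ₜ[ℤ] Additive.ofMul (Abelianization.of r)) = _
    rw [TensorProduct.AlgebraTensorModule.congr_tmul]
    rfl
  refine ⟨hπσ, T, hT, ?_⟩
  intro ρH hρH
  have hconjmem : ∀ (x : FreeGroup (Fin n)) (r : π.ker), x * ↑r * x⁻¹ ∈ π.ker := by
    intro x r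
    have hr : π ↑r = 1 := r.2
    simp [MonoidHom.mem_ker, hr]
  have hsmem : ∀ a : FreeGroup (Fin n), σ a * a⁻¹ ∈ π.ker := by
    intro a; simp [MonoidHom.mem_ker, hπσ a]
  -- commutation
  have hcomm : ∀ (g : G) (v : ℚ ⊗[ℤ] Additive (Abelianization π.ker)),
      T (ρH g v) = ρH g (T v) := by
    intro g v
    obtain ⟨x, rfl⟩ := hπ g
    have key : (T.toLinearMap ∘ₗ (ρH (π x))) = ((ρH (π x)) ∘ₗ T.toLinearMap) := by
      apply LinearMap.ext_on (span_h1Class_top (R := π.ker))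
      rintro _ ⟨r, rfl⟩
      simp only [LinearMap.comp_apply, LinearEquiv.coe_coe]
      rw [hρH x r (hconjmem x r), hT _ ((hker _).mp (hconjmem x r)), hT r ((hker ↑r).mp r.2)]
      rw [← hπσ x]
      refine Eq.trans ?_ (hρH (σ x) ⟨σ ↑r, (hker ↑r).mp r.2⟩
        (hconjmem (σ x) ⟨σ ↑r, (hker ↑r).mp r.2⟩)).symm
      refine h1Class_congr ?_
      show σ (x * ↑r * x⁻¹) = σ x * σ ↑r * (σ x)⁻¹
      rw [map_mul, map_mul, map_inv]
    exact DFunLike.congr_fun key v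
  refine ⟨hcomm, ?_⟩
  -- the submodule M spanned by conjugates of z^m
  have hzm : z ^ m ∈ π.ker := by simp [MonoidHom.mem_ker, hgm]
  set v0 : ℚ ⊗[ℤ] Additive (Abelianization π.ker) := h1Class ℚ (⟨z ^ m, hzm⟩ : π.ker)
    with hv0def
  set vX : FreeGroup (Fin n) → ℚ ⊗[ℤ] Additive (Abelianization π.ker) :=
    fun x => h1Class ℚ (⟨x * z ^ m * x⁻¹, hconjmem x ⟨z ^ m, hzm⟩⟩ : π.ker) with hvXdef
  set M := Submodule.span ℚ (Set.range vX) with hMdef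
  have hvX : ∀ x, vX x = ρH (π x) v0 := fun x =>
    (hρH x ⟨z ^ m, hzm⟩ (hconjmem x ⟨z ^ m, hzm⟩)).symm
  have hMg : ∀ (g : G) (u), u ∈ M → ρH g u ∈ M := by
    intro g u hu
    obtain ⟨x', rfl⟩ := hπ g
    induction hu using Submodule.span_induction with
    | mem u hu =>
      obtain ⟨x, rfl⟩ := hu
      rw [hvX x, ← Module.End.mul_apply, ← map_mul, ← map_mul, ← hvX (x' * x)]
      exact Submodule.subset_span ⟨x' * x, rfl⟩
    | zero => simp
    | add a b _ _ ha hb => rw [map_add]; exact Submodule.add_mem _ ha hb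
    | smul c a _ ha => rw [map_smul]; exact Submodule.smul_mem _ _ ha
  have hv0fix : ρH (π z) v0 = v0 := by
    rw [hv0def, hρH z ⟨z ^ m, hzm⟩ (hconjmem z ⟨z ^ m, hzm⟩)]
    exact h1Class_congr (by group)
  -- the cocycle lands in M
  have hfM : ∀ a : FreeGroup (Fin n), h1Class ℚ (⟨σ a * a⁻¹, hsmem a⟩ : π.ker) ∈ M := by
    intro a
    induction hgen a using Subgroup.closure_induction with
    | mem a ha =>
      obtain ⟨i, rfl⟩ := ha
      by_cases hi : i = ⟨0, h0⟩
      · subst hi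
        refine Submodule.subset_span ⟨1, ?_⟩
        refine h1Class_congr ?_
        show 1 * z ^ m * 1⁻¹ = σ y0 * y0⁻¹
        rw [hσdef, hpowy0 m]; group
      · rw [h1Class_congr (show σ (y i) * (y i)⁻¹ = ((1 : π.ker) : FreeGroup (Fin n)) by
          rw [hσdef, hpowyi m i hi]; simp), h1Class_one]
        exact Submodule.zero_mem _
    | one =>
      rw [h1Class_congr (show σ 1 * (1 : FreeGroup (Fin n))⁻¹
          = ((1 : π.ker) : FreeGroup (Fin n)) by simp), h1Class_one]
      exact Submodule.zero_mem _
    | mul a b ha hb iha ihb =>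
      have e1 : (⟨σ (a * b) * (a * b)⁻¹, hsmem (a * b)⟩ : π.ker)
          = (⟨σ a * ↑(⟨σ b * b⁻¹, hsmem b⟩ : π.ker) * (σ a)⁻¹,
              hconjmem (σ a) ⟨σ b * b⁻¹, hsmem b⟩⟩ : π.ker)
            * ⟨σ a * a⁻¹, hsmem a⟩ := by
        apply Subtype.ext
        show σ (a * b) * (a * b)⁻¹ = (σ a * (σ b * b⁻¹) * (σ a)⁻¹) * (σ a * a⁻¹)
        rw [map_mul]; group
      rw [e1, h1Class_mul]
      refine Submodule.add_mem _ ?_ iha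
      rw [← hρH (σ a) ⟨σ b * b⁻¹, hsmem b⟩ (hconjmem (σ a) ⟨σ b * b⁻¹, hsmem b⟩)]
      exact hMg _ _ ihb
    | inv a ha iha =>
      have e1 : (⟨σ a⁻¹ * (a⁻¹)⁻¹, hsmem a⁻¹⟩ : π.ker)
          = (⟨(σ a)⁻¹ * ↑((⟨σ a * a⁻¹, hsmem a⟩ : π.ker)⁻¹) * ((σ a)⁻¹)⁻¹,
              hconjmem (σ a)⁻¹ (⟨σ a * a⁻¹, hsmem a⟩ : π.ker)⁻¹⟩ : π.ker) := by
        apply Subtype.ext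
        show σ a⁻¹ * (a⁻¹)⁻¹ = (σ a)⁻¹ * (σ a * a⁻¹)⁻¹ * ((σ a)⁻¹)⁻¹
        rw [map_inv]; group
      rw [e1, ← hρH ((σ a)⁻¹) _ (hconjmem (σ a)⁻¹ (⟨σ a * a⁻¹, hsmem a⟩ : π.ker)⁻¹),
        h1Class_inv]
      exact hMg _ _ (Submodule.neg_mem _ iha)
  -- T v - v lands in M
  have hTsub : ∀ v, T v - v ∈ M := by
    have hgen' : ∀ r : π.ker, T (h1Class ℚ r) - h1Class ℚ r ∈ M := by
      intro r
      rw [hT r ((hker ↑r).mp r.2)]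
      have e1 : (⟨σ ↑r * (↑r)⁻¹, hsmem ↑r⟩ : π.ker)
          = (⟨σ ↑r, (hker ↑r).mp r.2⟩ : π.ker) * r⁻¹ := Subtype.ext rfl
      have h := hfM ↑r
      rw [e1, h1Class_mul, h1Class_inv] at h
      rwa [← sub_eq_add_neg] at h
    intro v
    have hv : v ∈ Submodule.span ℚ (Set.range (h1Class ℚ (R := π.ker))) := by
      rw [span_h1Class_top]; trivial
    induction hv using Submodule.span_induction with
    | mem x hx => obtain ⟨r, rfl⟩ := hx; exact hgen' r
    | zero => simpa using Submodule.zero_mem M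
    | add a b _ _ ha hb =>
      have : T (a + b) - (a + b) = (T a - a) + (T b - b) := by rw [map_add]; abel
      rw [this]; exact Submodule.add_mem _ ha hb
    | smul c a _ ha =>
      have : T (c • a) - c • a = c • (T a - a) := by rw [map_smul, smul_sub]
      rw [this]; exact Submodule.smul_mem _ _ ha
  -- final part
  intro W hWinv hiso w hw
  obtain ⟨e, he⟩ := hiso
  have hA : ∀ u, ∀ hu : u ∈ W, ρH (π z) u = u → u = 0 := by
    intro u hu hfixu
    set v := e.symm ⟨u, hu⟩ with hvdef
    have h2 : ((e (ρV (π z) v) : W) : ℚ ⊗[ℤ] Additive (Abelianization π.ker))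
        = ρH (π z) ↑(e v) := he (π z) v
    have h3 : e v = ⟨u, hu⟩ := by rw [hvdef, e.apply_symm_apply]
    rw [h3] at h2
    rw [show ((⟨u, hu⟩ : W) : ℚ ⊗[ℤ] Additive (Abelianization π.ker)) = u from rfl,
      hfixu] at h2
    have h4 : e (ρV (π z) v) = ⟨u, hu⟩ := Subtype.ext h2
    have h5 : ρV (π z) v = v := by apply e.injective; rw [h4, h3]
    have h6 : v = 0 := by
      by_contra h
      exact hfix z zprim v h h5
    have h7 : (⟨u, hu⟩ : W) = 0 := by rw [← h3, h6, map_zero]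
    exact congrArg Subtype.val h7
  set Φ : (ℚ ⊗[ℤ] Additive (Abelianization π.ker)) →ₗ[ℚ]
      (ℚ ⊗[ℤ] Additive (Abelianization π.ker)) := T.toLinearMap - LinearMap.id with hΦdef
  have hΦapply : ∀ v, Φ v = T v - v := by intro v; simp [hΦdef]
  have hΦcomm : ∀ (g : G) v, ρH g (Φ v) = Φ (ρH g v) := by
    intro g v
    rw [hΦapply, hΦapply, map_sub, hcomm]
  set W' := Submodule.map Φ W with hW'def
  have hW'g : ∀ (g : G) (u), u ∈ W' → ρH g u ∈ W' := by
    rintro g u ⟨w₁, hw₁, rfl⟩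
    exact ⟨ρH g w₁, hWinv g w₁ hw₁, (hΦcomm g w₁).symm ▸ rfl⟩
  have hB : ∀ u, u ∈ W' → ρH (π z) u = u → u = 0 := by
    rintro u ⟨w₁, hw₁, rfl⟩ hfixu
    set f : ℕ → ℚ ⊗[ℤ] Additive (Abelianization π.ker) :=
      fun k => ρH ((π z) ^ k) w₁ with hfdef
    set s := ∑ k ∈ Finset.range m, f k with hsdef
    have hsW : s ∈ W := Submodule.sum_mem _ fun k _ => hWinv _ _ hw₁
    have hfm : f m = f 0 := by rw [hfdef]; simp [hgm]
    have hshift : ∑ k ∈ Finset.range m, f (k + 1) = s := by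
      have h1 := Finset.sum_range_succ f m
      have h2 := Finset.sum_range_succ' f m
      rw [h1, hfm] at h2
      exact (add_right_cancel h2.symm)
    have hsfix : ρH (π z) s = s := by
      rw [hsdef, map_sum]
      have hterm : ∀ k, ρH (π z) (f k) = f (k + 1) := by
        intro k
        rw [hfdef, ← Module.End.mul_apply, ← map_mul, ← pow_succ']
      rw [Finset.sum_congr rfl fun k _ => hterm k]
      exact hshift
    have hs0 : s = 0 := hA s hsW hsfix
    have hupow : ∀ k : ℕ, ρH ((π z) ^ k) (Φ w₁) = Φ w₁ := by
      intro k
      induction k with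
      | zero => simp
      | succ k ih => rw [pow_succ', map_mul, Module.End.mul_apply, ih, hfixu]
    have hΦs : Φ s = (m : ℚ) • Φ w₁ := by
      rw [hsdef, map_sum]
      have : ∀ k, Φ (f k) = Φ w₁ := by
        intro k; rw [hfdef, ← hΦcomm, hupow k]
      rw [Finset.sum_congr rfl fun k _ => this k, Finset.sum_const, Finset.card_range,
        Nat.cast_smul_eq_nsmul]
    rw [hs0, map_zero] at hΦs
    have hmne : (m : ℚ) ≠ 0 := Nat.cast_ne_zero.mpr (by omega)
    exact ((smul_eq_zero.mp hΦs.symm).resolve_left hmne)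
  obtain ⟨C, hC⟩ := Submodule.exists_isCompl W'
  set p₁ : (ℚ ⊗[ℤ] Additive (Abelianization π.ker)) →ₗ[ℚ]
      (ℚ ⊗[ℤ] Additive (Abelianization π.ker)) :=
    W'.subtype ∘ₗ Submodule.projectionOnto W' C hC with hp₁def
  have hp₁mem : ∀ v, p₁ v ∈ W' := fun v =>
    (Submodule.projectionOnto W' C hC v).2
  have hp₁id : ∀ u, u ∈ W' → p₁ u = u := by
    intro u hu
    have := Submodule.linearProjOfIsCompl_apply_left hC ⟨u, hu⟩
    rw [hp₁def]
    simp only [LinearMap.comp_apply]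
    rw [show ((⟨u, hu⟩ : W') : ℚ ⊗[ℤ] Additive (Abelianization π.ker)) = u from rfl] at this
    rw [this]
    rfl
  haveI : Fintype G := Fintype.ofFinite G
  set P : (ℚ ⊗[ℤ] Additive (Abelianization π.ker)) →ₗ[ℚ]
      (ℚ ⊗[ℤ] Additive (Abelianization π.ker)) :=
    ∑ g : G, (ρH g⁻¹) ∘ₗ p₁ ∘ₗ (ρH g) with hPdef
  have hPmem : ∀ v, P v ∈ W' := by
    intro v
    rw [hPdef, LinearMap.sum_apply]
    exact Submodule.sum_mem _ fun g _ => hW'g g⁻¹ _ (hp₁mem (ρH g v))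
  have hPcomm : ∀ (h : G) v, ρH h (P v) = P (ρH h v) := by
    intro h v
    rw [hPdef, LinearMap.sum_apply, LinearMap.sum_apply, map_sum]
    refine Fintype.sum_equiv (Equiv.mulRight h⁻¹) _ _ ?_
    intro k
    simp only [LinearMap.comp_apply, Equiv.coe_mulRight]
    rw [show (ρH (k * h⁻¹)) ((ρH h) v) = ρH k v from by
        rw [← Module.End.mul_apply, ← map_mul, inv_mul_cancel_right],
      show (k * h⁻¹)⁻¹ = h * k⁻¹ from by group,
      ← Module.End.mul_apply (ρH h) (ρH k⁻¹), ← map_mul]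
  have hPv0 : P v0 = 0 := by
    apply hB _ (hPmem v0)
    rw [hPcomm (π z) v0, hv0fix]
  have hPzero : ∀ u, u ∈ M → P u = 0 := by
    intro u hu
    induction hu using Submodule.span_induction with
    | mem u hu =>
      obtain ⟨x, rfl⟩ := hu
      rw [hvX x, ← hPcomm (π x) v0, hPv0, map_zero]
    | zero => simp
    | add a b _ _ ha hb => rw [map_add, ha, hb, add_zero]
    | smul c a _ ha => rw [map_smul, ha, smul_zero]
  have hwM : Φ w ∈ M := by rw [hΦapply]; exact hTsub w
  have hwW' : Φ w ∈ W' := ⟨w, hw, rfl⟩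
  have hPw : P (Φ w) = (Fintype.card G : ℚ) • Φ w := by
    rw [hPdef, LinearMap.sum_apply]
    have hterm : ∀ g : G, ((ρH g⁻¹) ∘ₗ p₁ ∘ₗ (ρH g)) (Φ w) = Φ w := by
      intro g
      simp only [LinearMap.comp_apply]
      rw [hp₁id _ (hW'g g _ hwW'), ← Module.End.mul_apply, ← map_mul, inv_mul_cancel,
        map_one, Module.End.one_apply]
    rw [Finset.sum_congr rfl fun g _ => hterm g, Finset.sum_const, Finset.card_univ,
      Nat.cast_smul_eq_nsmul]
  rw [hPzero _ hwM] at hPw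
  have hcard : (Fintype.card G : ℚ) ≠ 0 := Nat.cast_ne_zero.mpr Fintype.card_ne_zero
  have hΦw : Φ w = 0 := (smul_eq_zero.mp hPw.symm).resolve_left hcard
  rw [hΦapply] at hΦw
  exact sub_eq_zero.mp hΦw
end

section
/- Let n ≥ 2, let G be a finite group, and let π : F_n → G be a surjective homomorphism. Assume that for some field 𝕜 of characteristic 0 there exists a nonzero 𝕜-linear representation V of G such that for every primitive x ∈ F_n and every nonzero v ∈ V, π(x)·v ≠ v. Then there exists a finite-dimensional irreducible ℚ-linear representation V' of G such that for every primitive x ∈ F_n and every nonzero v' ∈ V', π(x)·v' ≠ v'. -/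
/-- A finite-dimensional irreducible `ℚ`-representation `V'` of `G` such that the image
under `π` of every primitive element of `F_n` fixes no nonzero vector of `V'`. -/
structure GoodRationalRep (n : ℕ) (G : Type) [Group G] (π : FreeGroup (Fin n) →* G) where
  /-- The underlying `ℚ`-vector space. -/
  V' : Type
  [acg : AddCommGroup V']
  [mod : Module ℚ V']
  /-- The representation of `G` on `V'`. -/
  ρ' : Representation ℚ G V'
  findim : FiniteDimensional ℚ V'
  nontriv : Nontrivial V'
  irred : ∀ W : Submodule ℚ V', (∀ g : G, ∀ v ∈ W, ρ' g v ∈ W) → W = ⊥ ∨ W = ⊤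
  fixfree : ∀ x : FreeGroup (Fin n), IsPrimitiveElt x → ∀ v : V', v ≠ 0 → ρ' (π x) v ≠ v


structure AuxRep (G : Type) [Group G] (P : Set G) where
  V' : Type
  [acg : AddCommGroup V']
  [mod : Module ℚ V']
  ρ' : Representation ℚ G V'
  findim : FiniteDimensional ℚ V'
  nontriv : Nontrivial V'
  irred : ∀ W : Submodule ℚ V', (∀ g : G, ∀ v ∈ W, ρ' g v ∈ W) → W = ⊥ ∨ W = ⊤
  fixfree : ∀ g ∈ P, ∀ v : V', v ≠ 0 → ρ' g v ≠ v

set_option maxHeartbeats 2000000 in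
theorem aux_exists (G : Type) [Group G] [Fintype G] (P : Set G)
    (𝕜 : Type) [Field 𝕜] [CharZero 𝕜]
    (V : Type) [AddCommGroup V] [Module 𝕜 V] [Nontrivial V]
    (ρ : Representation 𝕜 G V)
    (hfix : ∀ g ∈ P, ∀ v : V, v ≠ 0 → ρ g v ≠ v) :
    Nonempty (AuxRep G P) := by
  classical
  let R := MonoidAlgebra ℚ G
  haveI : FiniteDimensional ℚ R :=
    LinearEquiv.finiteDimensional ((Finsupp.linearEquivFunOnFinite ℚ ℚ G).symm.trans
      (MonoidAlgebra.coeffLinearEquiv ℚ).symm)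
  let ν : G → R := fun g => ∑ k ∈ Finset.range (orderOf g), MonoidAlgebra.of ℚ G (g ^ k)
  let c : R →ₐ[ℚ] MonoidAlgebra 𝕜 G :=
    (MonoidAlgebra.lift ℚ (MonoidAlgebra 𝕜 G) G) (MonoidAlgebra.of 𝕜 G)
  let Φ : R →+* Module.End 𝕜 V := (ρ.asAlgebraHom : MonoidAlgebra 𝕜 G →+* _).comp (c : R →+* _)
  have hΦof : ∀ g : G, Φ (MonoidAlgebra.of ℚ G g) = ρ g := by
    intro g
    show ρ.asAlgebraHom (c (MonoidAlgebra.of ℚ G g)) = ρ g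
    rw [MonoidAlgebra.lift_of]
    show ρ.asAlgebraHom (MonoidAlgebra.single g 1) = ρ g
    rw [Representation.asAlgebraHom_single, one_smul]
  -- averaging: ν g acts as 0 on V for g ∈ P
  have hν0 : ∀ g ∈ P, Φ (ν g) = 0 := by
    intro g hg
    apply LinearMap.ext; intro v
    have hsum : Φ (ν g) = ∑ k ∈ Finset.range (orderOf g), (ρ (g ^ k) : Module.End 𝕜 V) := by
      rw [map_sum]
      exact Finset.sum_congr rfl fun k _ => hΦof (g ^ k)
    rw [hsum, LinearMap.zero_apply, LinearMap.sum_apply]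
    set m := orderOf g with hmdef
    set w := ∑ k ∈ Finset.range m, ρ (g ^ k) v with hw
    show w = 0
    by_contra hne
    apply hfix g hg w hne
    have hstep : ρ g w = ∑ k ∈ Finset.range m, ρ (g ^ (k + 1)) v := by
      rw [hw, map_sum]
      refine Finset.sum_congr rfl fun k _ => ?_
      have : ρ g (ρ (g ^ k) v) = (ρ g * ρ (g ^ k)) v := rfl
      rw [this, ← map_mul, ← pow_succ']
    have h1 : ∑ k ∈ Finset.range (m + 1), ρ (g ^ k) v
        = (∑ k ∈ Finset.range m, ρ (g ^ (k + 1)) v) + ρ (g ^ 0) v :=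
      Finset.sum_range_succ' _ m
    have h2 : ∑ k ∈ Finset.range (m + 1), ρ (g ^ k) v = w + ρ (g ^ m) v :=
      Finset.sum_range_succ _ m
    have h3 : ρ (g ^ m) v = ρ (g ^ 0) v := by
      rw [hmdef, pow_orderOf_eq_one, pow_zero]
    rw [hstep]
    have := h1.symm.trans h2
    rw [h3] at this
    exact add_right_cancel this
  -- the left ideal K
  let S : Set R := {r : R | ∃ g ∈ P, ∃ b : R, r = ν g * b}
  let K : Submodule R R := Submodule.span R S
  have hK0 : ∀ r ∈ K, Φ r = 0 := by
    intro r hr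
    induction hr using Submodule.span_induction with
    | mem x hx =>
      obtain ⟨g, hg, b, rfl⟩ := hx
      rw [map_mul, hν0 g hg, zero_mul]
    | zero => exact map_zero Φ
    | add x y _ _ hx hy => rw [map_add, hx, hy, add_zero]
    | smul a x _ hx =>
      rw [smul_eq_mul, map_mul, hx, mul_zero]
  have h1K : (1 : R) ∉ K := by
    intro h
    obtain ⟨v, hv⟩ := exists_ne (0 : V)
    have := hK0 1 h
    rw [map_one] at this
    exact hv (by simpa using congrArg (fun f : Module.End 𝕜 V => f v) this)
  -- the quotient module M
  let M := R ⧸ K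
  haveI : FiniteDimensional ℚ M :=
    Module.Finite.of_surjective (K.mkQ.restrictScalars ℚ) (Submodule.mkQ_surjective K)
  have hMne : (Submodule.Quotient.mk (1 : R) : M) ≠ 0 := by
    rw [Ne, Submodule.Quotient.mk_eq_zero]
    exact h1K
  haveI : Nontrivial M := ⟨_, _, hMne⟩
  -- ν g kills M for g ∈ P
  have hνM : ∀ g ∈ P, ∀ m : M, ν g • m = 0 := by
    intro g hg m
    obtain ⟨r, rfl⟩ := Submodule.Quotient.mk_surjective K m
    have : ν g • (Submodule.Quotient.mk r : M) = Submodule.Quotient.mk (ν g • r) :=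
      (Submodule.Quotient.mk_smul K _ _).symm
    rw [this, Submodule.Quotient.mk_eq_zero]
    exact Submodule.subset_span ⟨g, hg, r, by rw [smul_eq_mul]⟩
  -- minimal nonzero R-submodule
  let rk : Submodule R M → ℕ := fun N => Module.finrank ℚ (N.restrictScalars ℚ)
  let s : Set ℕ := {d | ∃ N : Submodule R M, N ≠ ⊥ ∧ rk N = d}
  have hs : s.Nonempty := ⟨rk ⊤, ⊤, top_ne_bot, rfl⟩
  obtain ⟨U, hUne, hUrk⟩ : ∃ N : Submodule R M, N ≠ ⊥ ∧ rk N = sInf s := Nat.sInf_mem hs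
  have hUmin : ∀ N : Submodule R M, N ≠ ⊥ → N ≤ U → N = U := by
    intro N hN hle
    have h1 : rk N ≤ rk U := by
      haveI : FiniteDimensional ℚ (U.restrictScalars ℚ) := inferInstance
      exact Submodule.finrank_mono (by exact hle : N.restrictScalars ℚ ≤ U.restrictScalars ℚ)
    have h2 : rk U ≤ rk N := hUrk ▸ Nat.sInf_le ⟨N, hN, rfl⟩
    have : N.restrictScalars ℚ = U.restrictScalars ℚ :=
      Submodule.eq_of_le_of_finrank_le (by exact hle) (le_antisymm h1 h2).ge
    exact Submodule.restrictScalars_injective ℚ R M this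
  -- build the representation on U
  haveI : FiniteDimensional ℚ U := (inferInstance : FiniteDimensional ℚ (U.restrictScalars ℚ))
  have hact : ∀ (g : G) (u : U), MonoidAlgebra.of ℚ G g • (u : M) ∈ U :=
    fun g u => U.smul_mem _ u.2
  let ρ' : Representation ℚ G U :=
    { toFun := fun g =>
        { toFun := fun u => ⟨MonoidAlgebra.of ℚ G g • (u : M), hact g u⟩
          map_add' := fun u v => by
            apply Subtype.ext
            simp [smul_add]
          map_smul' := fun q u => by
            apply Subtype.ext
            show MonoidAlgebra.of ℚ G g • (q • (u : M)) = q • (MonoidAlgebra.of ℚ G g • (u : M))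
            rw [smul_comm] }
      map_one' := by
        apply LinearMap.ext; intro u
        apply Subtype.ext
        show MonoidAlgebra.of ℚ G (1 : G) • (u : M) = (u : M)
        rw [map_one, one_smul]
      map_mul' := fun g h => by
        apply LinearMap.ext; intro u
        apply Subtype.ext
        show MonoidAlgebra.of ℚ G (g * h) • (u : M)
            = MonoidAlgebra.of ℚ G g • (MonoidAlgebra.of ℚ G h • (u : M))
        rw [map_mul, mul_smul] }
  -- nontriviality of U
  obtain ⟨u₀, hu₀U, hu₀⟩ := (Submodule.ne_bot_iff U).mp hUne
  haveI : Nontrivial U := ⟨⟨u₀, hu₀U⟩, 0, by simpa [Subtype.ext_iff] using hu₀⟩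
  refine ⟨⟨U, ρ', inferInstance, inferInstance, ?_, ?_⟩⟩
  · -- irreducibility
    intro W hW
    let Wm : Set M := (fun u : U => (u : M)) '' (W : Set U)
    have hWm_add : ∀ a ∈ Wm, ∀ b ∈ Wm, a + b ∈ Wm := by
      rintro _ ⟨a, ha, rfl⟩ _ ⟨b, hb, rfl⟩
      exact ⟨a + b, W.add_mem ha hb, rfl⟩
    have hWm_zero : (0 : M) ∈ Wm := ⟨0, W.zero_mem, rfl⟩
    have hWm_qsmul : ∀ (q : ℚ), ∀ a ∈ Wm, q • a ∈ Wm := by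
      rintro q _ ⟨a, ha, rfl⟩
      exact ⟨q • a, W.smul_mem q ha, rfl⟩
    have hWm_gsmul : ∀ (g : G), ∀ a ∈ Wm, MonoidAlgebra.of ℚ G g • a ∈ Wm := by
      rintro g _ ⟨a, ha, rfl⟩
      exact ⟨ρ' g a, hW g a ha, rfl⟩
    have hWm_smul : ∀ (r : R), ∀ a ∈ Wm, r • a ∈ Wm := by
      intro r a ha
      have hr : r = r.coeff.sum MonoidAlgebra.single := (MonoidAlgebra.sum_coeff_single r).symm
      rw [hr, Finsupp.sum, Finset.sum_smul]
      refine Finset.sum_induction _ (· ∈ Wm) (fun a b ha hb => hWm_add a ha b hb) hWm_zero ?_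
      intro g hg
      have : MonoidAlgebra.single g (r.coeff g) • a
          = (r.coeff g) • (MonoidAlgebra.of ℚ G g • a) := by
        rw [← smul_assoc]
        congr 1
        show MonoidAlgebra.single g (r.coeff g) = r.coeff g • MonoidAlgebra.single g (1 : ℚ)
        rw [MonoidAlgebra.smul_single', mul_one]
      rw [this]
      exact hWm_qsmul _ _ (hWm_gsmul g a ha)
    let W' : Submodule R M :=
      { carrier := Wm
        add_mem' := fun {a b} ha hb => hWm_add a ha b hb
        zero_mem' := hWm_zero
        smul_mem' := fun r {a} ha => hWm_smul r a ha }
    by_cases hW' : W' = ⊥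
    · left
      rw [Submodule.eq_bot_iff]
      intro w hw
      have hwm : (w : M) ∈ W' := ⟨w, hw, rfl⟩
      have : (w : M) = 0 := by
        rw [hW'] at hwm
        simpa using hwm
      exact Subtype.ext this
    · right
      have hW'U : W' ≤ U := by
        rintro _ ⟨a, _, rfl⟩
        exact a.2
      have : W' = U := hUmin W' hW' hW'U
      rw [eq_top_iff]
      intro u _
      have hmem : (u : M) ∈ Wm := by
        show (u : M) ∈ W'
        rw [this]
        exact u.2
      obtain ⟨w, hw, hwu⟩ := hmem
      exact (Subtype.ext hwu : w = u) ▸ hw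
  · -- fixed-point freeness
    intro g hg v hv hfixv
    have hm0 : (v : M) ≠ 0 := fun h => hv (Subtype.ext h)
    have hsm : MonoidAlgebra.of ℚ G g • (v : M) = (v : M) := congrArg Subtype.val hfixv
    have hpow : ∀ k : ℕ, MonoidAlgebra.of ℚ G (g ^ k) • (v : M) = (v : M) := by
      intro k
      induction k with
      | zero => rw [pow_zero, map_one, one_smul]
      | succ k ih =>
        rw [pow_succ, map_mul, mul_smul, hsm, ih]
    have hsum : ν g • (v : M) = (orderOf g : ℚ) • (v : M) := by
      show (∑ k ∈ Finset.range (orderOf g), MonoidAlgebra.of ℚ G (g ^ k)) • (v : M) = _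
      rw [Finset.sum_smul]
      have : ∀ k ∈ Finset.range (orderOf g),
          MonoidAlgebra.of ℚ G (g ^ k) • (v : M) = (v : M) := fun k _ => hpow k
      rw [Finset.sum_congr rfl this, Finset.sum_const, Finset.card_range]
      exact (Nat.cast_smul_eq_nsmul ℚ _ _).symm
    have := hνM g hg (v : M)
    rw [hsum] at this
    have hord : ((orderOf g : ℚ)) ≠ 0 := by
      exact_mod_cast (orderOf_pos g).ne'
    exact hm0 ((smul_eq_zero.mp this).resolve_left hord)

/-- (Malestein–Putman, Lemma 4.3.)  Let `π : F_n → G` be a surjection onto a finite group.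
If for some field `𝕜` of characteristic `0` there is a nonzero `𝕜`-representation `V` of
`G` such that the image of every primitive element of `F_n` fixes no nonzero vector of
`V`, then there is a finite-dimensional irreducible `ℚ`-representation of `G` with the
same property. -/
theorem exists_rational_rep_of_rep
    (n : ℕ) (hn : 2 ≤ n) (G : Type) [Group G] [Finite G]
    (π : FreeGroup (Fin n) →* G) (hπ : Function.Surjective π)
    (𝕜 : Type) [Field 𝕜] [CharZero 𝕜]
    (V : Type) [AddCommGroup V] [Module 𝕜 V] [Nontrivial V]
    (ρ : Representation 𝕜 G V)
    (hfix : ∀ x : FreeGroup (Fin n), IsPrimitiveElt x → ∀ v : V, v ≠ 0 → ρ (π x) v ≠ v) :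
    Nonempty (GoodRationalRep n G π) := by
  classical
  cases nonempty_fintype G
  obtain ⟨A⟩ := aux_exists G (π '' {x | IsPrimitiveElt x}) 𝕜 V ρ
    (by rintro g ⟨x, hx, rfl⟩; exact hfix x hx)
  letI := A.acg
  letI := A.mod
  exact ⟨⟨A.V', A.ρ', A.findim, A.nontriv, A.irred,
    fun x hx v hv => A.fixfree (π x) ⟨x, hx, rfl⟩ v hv⟩⟩
end
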